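/- arXiv:1604.02067 — 8 statements merged into one kernel-verified Lean document; each statement's English description precedes it below -/
import Mathlib

section
/- Let R be a commutative ring and let x_1, …, x_r be elements of R (r ≥ 1). For integers 1 ≤ s ≤ r and indices 1 ≤ i_1 < i_2 < … < i_s ≤ r, let B be the s × s matrix whose (d, α)-entry (for 0 ≤ d ≤ s−1 and 1 ≤ α ≤ s) is e_{r, i_α}^{d}, the elementary symmetric polynomial of degree d in the r − 1 quantities x_1, …, x_r with x_{i_α} omitted (with e^0 = 1). Then det B = ∏_{1 ≤ α < β ≤ s} (x_{i_α} − x_{i_β}). -/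
open Multiset

private lemma esymm_cons_rec {R : Type*} [CommRing R] (a : R) (s : Multiset R) (n : ℕ) :
    (a ::ₘ s).esymm (n + 1) = s.esymm (n + 1) + a * s.esymm n := by
  simp only [Multiset.esymm, powersetCard_cons, Multiset.map_add, Multiset.sum_add,
    Multiset.map_map, Function.comp_def, Multiset.prod_cons, Multiset.sum_map_mul_left]

private lemma esymm_erase_sum {R : Type*} [CommRing R] (a : R) (s : Multiset R) (d : ℕ) :
    s.esymm d = ∑ k ∈ Finset.range (d + 1), (a ::ₘ s).esymm (d - k) * (-a) ^ k := by
  induction d with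
  | zero => simp [Multiset.esymm]
  | succ d ih =>
      rw [Finset.sum_range_succ']
      simp only [Nat.succ_sub_succ]
      have : ∑ k ∈ Finset.range (d + 1), (a ::ₘ s).esymm (d - k) * (-a) ^ (k + 1)
          = (-a) * ∑ k ∈ Finset.range (d + 1), (a ::ₘ s).esymm (d - k) * (-a) ^ k := by
        rw [Finset.mul_sum]; congr 1; ext k; ring
      rw [this, ← ih, Nat.sub_zero, pow_zero, mul_one, esymm_cons_rec]
      ring

/-- For elements `x 0, …, x (r-1)` of a commutative ring `R`, the `s × s`
matrix whose `(d, α)` entry is the elementary symmetric polynomial of degree `d` evaluated at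
the `r - 1` quantities `x 0, …, x (r-1)` with `x (i α)` omitted, where
`i 0 < i 1 < … < i (s-1)`, has determinant `∏_{α < β} (x (i α) - x (i β))`. -/
theorem det_esymm_omit {R : Type*} [CommRing R] (r : ℕ) (hr : 1 ≤ r) (x : Fin r → R)
    (s : ℕ) (hs : 1 ≤ s) (hsr : s ≤ r) (i : Fin s → Fin r) (hi : StrictMono i) :
    (Matrix.of fun d α : Fin s =>
        (((Finset.univ.erase (i α)).val.map x).esymm (d : ℕ))).det =
      ∏ α : Fin s, ∏ β ∈ Finset.Ioi α, (x (i α) - x (i β)) := by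
  set e : Multiset R := (Finset.univ.val.map x) with he
  have hcons : ∀ α : Fin s, e = x (i α) ::ₘ ((Finset.univ.erase (i α)).val.map x) := by
    intro α
    rw [he, ← Multiset.map_cons, Finset.erase_val,
      Multiset.cons_erase (Finset.mem_univ_val (i α))]
  set A : Matrix (Fin s) (Fin s) R := Matrix.of fun d k : Fin s =>
    if (k : ℕ) ≤ (d : ℕ) then e.esymm ((d : ℕ) - (k : ℕ)) else 0 with hA
  have hdecomp : (Matrix.of fun d α : Fin s =>
      (((Finset.univ.erase (i α)).val.map x).esymm (d : ℕ)))
      = A * (Matrix.vandermonde fun α => -x (i α)).transpose := by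
    ext d α
    rw [Matrix.mul_apply]
    simp only [Matrix.of_apply, Matrix.transpose_apply, Matrix.vandermonde_apply, hA]
    rw [esymm_erase_sum (x (i α)) _ (d : ℕ), ← hcons α]
    symm
    rw [Fin.sum_univ_eq_sum_range
        (fun k => (if k ≤ (d : ℕ) then e.esymm ((d : ℕ) - k) else 0) * (-x (i α)) ^ k) s,
      ← Finset.sum_subset (Finset.range_subset_range.mpr d.isLt) (fun k _ hk => by
        rw [if_neg (fun h => hk (Finset.mem_range.mpr (by omega))), zero_mul])]
    exact Finset.sum_congr rfl fun k hk =>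
      by rw [if_pos (Nat.lt_succ_iff.mp (Finset.mem_range.mp hk))]
  rw [hdecomp, Matrix.det_mul, Matrix.det_transpose, Matrix.det_vandermonde]
  have hAdet : A.det = 1 := by
    rw [Matrix.det_of_lowerTriangular]
    · simp [hA, Multiset.esymm]
    · intro d k hdk
      simp only [hA, Matrix.of_apply]
      exact if_neg (Nat.not_le.mpr hdk)
  rw [hAdet, one_mul]
  congr 1; ext α; congr 1; ext β; ring
end

section
/- Let k be a field, let x_1, …, x_r be elements of k, and let 1 ≤ s ≤ r. Let A_r^s be the s × r matrix whose (d, j)-entry (for 0 ≤ d ≤ s−1 and 1 ≤ j ≤ r) is e_{r,j}^{d}, the elementary symmetric polynomial of degree d in the r − 1 elements x_1, …, x_r with x_j omitted. Then A_r^s has full rank s if and only if the set {x_1, …, x_r} has at least s distinct elements. -/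
/-!
Write `M` for the multiset of all the `x j`. The recursion
`e_{d+1}(a ::ₘ N) = e_{d+1}(N) + a e_d(N)` inverts to
`e_d(M - x_j) = ∑_{b ≤ d} (-x_j)^b e_{d-b}(M)`, so the matrix is a unitriangular Toeplitz matrix
in the `e_i(M)` times the `s × r` matrix `((-x_j)^b)`, and has the same rank as the latter.
Its columns depend only on the value of `x_j`, so its rank is at most the number of distinct
values, and any `s` distinct values give an invertible Vandermonde minor.
-/

open Matrix

namespace Multiset

section CommSemiring

variable {R : Type*} [CommSemiring R]

@[simp]
theorem esymm_zero (s : Multiset R) : s.esymm 0 = 1 := by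
  simp [esymm]

theorem esymm_cons_succ (a : R) (s : Multiset R) (n : ℕ) :
    (a ::ₘ s).esymm (n + 1) = s.esymm (n + 1) + a * s.esymm n := by
  simp only [esymm, powersetCard_cons, map_add, sum_add, map_map, Function.comp_def, prod_cons,
    sum_map_mul_left]

end CommSemiring

variable {R : Type*} [CommRing R]

theorem esymm_eq_sum_esymm_cons (a : R) (s : Multiset R) (n : ℕ) :
    s.esymm n = ∑ b ∈ Finset.range (n + 1), (-a) ^ b * (a ::ₘ s).esymm (n - b) := by
  induction n with
  | zero => simp
  | succ n ih =>
    rw [Finset.sum_range_succ', eq_sub_of_add_eq (esymm_cons_succ a s n).symm, ih, Finset.mul_sum]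
    simp only [Nat.add_sub_add_right, pow_succ, pow_zero, one_mul, Nat.sub_zero]
    rw [sub_eq_neg_add, ← Finset.sum_neg_distrib]
    congr 1
    exact Finset.sum_congr rfl fun _ _ => by ring

theorem esymm_erase [DecidableEq R] {a : R} {s : Multiset R} (h : a ∈ s) (n : ℕ) :
    (s.erase a).esymm n = ∑ b ∈ Finset.range (n + 1), (-a) ^ b * s.esymm (n - b) := by
  conv_rhs => rw [← cons_erase h]
  exact esymm_eq_sum_esymm_cons a _ n

end Multiset

namespace Matrix

variable {ι K : Type*} [Field K]

theorem rank_le_ncard_range_row {m n : Type*} [Fintype m] [Fintype n] (A : Matrix m n K) :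
    A.rank ≤ (Set.range A.row).ncard := by
  classical
  rw [rank_eq_finrank_span_row, Set.ncard_eq_toFinset_card']
  exact finrank_span_le_card _

variable [Fintype ι]

theorem rank_rectVandermonde_one_le (v : ι → K) (n : ℕ) :
    (rectVandermonde v 1 n).rank ≤ (Set.range v).ncard := by
  have hrow : (rectVandermonde v 1 n).row = (fun c (j : Fin n) => c ^ (j : ℕ)) ∘ v := by
    ext i j
    simp [rectVandermonde_apply]
  calc _ ≤ _ := rank_le_ncard_range_row _
    _ ≤ _ := by
      rw [hrow, Set.range_comp]
      exact Set.ncard_image_le (Set.finite_range v)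

theorem rank_rectVandermonde_one_eq_iff (v : ι → K) (n : ℕ) :
    (rectVandermonde v 1 n).rank = n ↔ n ≤ (Set.range v).ncard := by
  refine ⟨fun h => h ▸ rank_rectVandermonde_one_le v n, fun h => ?_⟩
  classical
  obtain ⟨e⟩ : Nonempty (Fin n ↪ Set.range v) := Function.Embedding.nonempty_of_card_le <| by
    rwa [Fintype.card_fin, ← Set.toFinset_card, ← Set.ncard_eq_toFinset_card']
  set σ := Set.rangeSplitting v ∘ e
  have hσ : Function.Injective (v ∘ σ) := by
    intro i j hij
    simp only [σ, Function.comp_apply, Set.apply_rangeSplitting] at hij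
    exact e.injective (Subtype.ext hij)
  have hminor : (rectVandermonde v 1 n).submatrix σ id = vandermonde (v ∘ σ) := by
    ext i j
    simp [rectVandermonde_apply]
  have hdet : IsUnit (vandermonde (v ∘ σ)).det := (det_vandermonde_ne_zero_iff.mpr hσ).isUnit
  refine le_antisymm ((rank_le_card_width _).trans_eq (Fintype.card_fin n)) ?_
  calc n = (vandermonde (v ∘ σ)).rank := by
        rw [rank_of_isUnit _ ((isUnit_iff_isUnit_det _).mpr hdet), Fintype.card_fin]
    _ ≤ _ := hminor ▸ rank_submatrix_le _ _ _

end Matrix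

section Toeplitz

variable {R ι : Type*}

def esymmToeplitz [CommSemiring R] (s : Multiset R) (n : ℕ) : Matrix (Fin n) (Fin n) R :=
  of fun d b => if b ≤ d then s.esymm (d - b) else 0

theorem esymmToeplitz_isLowerTriangular [CommSemiring R] (s : Multiset R) (n : ℕ) :
    (esymmToeplitz s n).IsLowerTriangular := fun _ _ hbd => if_neg (not_le.mpr hbd)

@[simp]
theorem esymmToeplitz_self [CommSemiring R] (s : Multiset R) {n : ℕ} (d : Fin n) :
    esymmToeplitz s n d d = 1 := by
  simp [esymmToeplitz]

theorem of_esymm_erase_eq_esymmToeplitz_mul [CommRing R] [DecidableEq R] {s : Multiset R}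
    {v : ι → R} (hv : ∀ j, v j ∈ s) (n : ℕ) :
    of (fun (d : Fin n) j => (s.erase (v j)).esymm d) =
      esymmToeplitz s n * (rectVandermonde (-v) 1 n)ᵀ := by
  ext d j
  have hd : (Finset.range n).filter (· ≤ (d : ℕ)) = Finset.range (d + 1) := by
    ext b
    simp only [Finset.mem_filter, Finset.mem_range]
    omega
  rw [of_apply, Multiset.esymm_erase (hv j), mul_apply, ← hd, Finset.sum_filter,
    ← Fin.sum_univ_eq_sum_range (fun b => if b ≤ (d : ℕ) then _ else 0)]
  refine Finset.sum_congr rfl fun b _ => ?_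
  simp only [esymmToeplitz, rectVandermonde_apply, transpose_apply, of_apply, Fin.le_def]
  split_ifs <;> simp [mul_comm]

end Toeplitz

theorem rank_esymm_omit_matrix_general {k : Type*} [Field k] (r : ℕ) (x : Fin r → k)
    (s : ℕ) :
    (Matrix.of fun (d : Fin s) (j : Fin r) =>
        (((Finset.univ.erase j).val.map x).esymm (d : ℕ))).rank = s ↔
      s ≤ Set.ncard (Set.range x) := by
  classical
  have hx (j : Fin r) : x j ∈ Finset.univ.val.map x :=
    Multiset.mem_map_of_mem x (Finset.mem_univ j)
  have hcols : (of fun (d : Fin s) (j : Fin r) => ((Finset.univ.erase j).val.map x).esymm d) =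
      of fun (d : Fin s) j => ((Finset.univ.val.map x).erase (x j)).esymm d := by
    ext d j
    rw [of_apply, of_apply, Finset.erase_val, Multiset.map_erase_of_mem _ _ (Finset.mem_univ j)]
  rw [hcols, of_esymm_erase_eq_esymmToeplitz_mul hx, rank_mul_eq_right_of_isLowerTriangular _ _
    (esymmToeplitz_isLowerTriangular _ _) (by simp), rank_transpose,
    rank_rectVandermonde_one_eq_iff, show -x = Neg.neg ∘ x from rfl, Set.range_comp,
    Set.ncard_image_of_injective _ neg_injective]

/-- The `s × r` matrix over a field `k` whose `(d, j)` entry is the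
elementary symmetric polynomial of degree `d` evaluated at the `r - 1` elements
`x 0, …, x (r-1)` with `x j` omitted has full rank `s` if and only if the set
`{x 0, …, x (r-1)}` has at least `s` distinct elements. -/
theorem rank_esymm_omit_matrix {k : Type*} [Field k] (r : ℕ) (x : Fin r → k)
    (s : ℕ) (hs : 1 ≤ s) (hsr : s ≤ r) :
    (Matrix.of fun (d : Fin s) (j : Fin r) =>
        (((Finset.univ.erase j).val.map x).esymm (d : ℕ))).rank = s ↔
      s ≤ Set.ncard (Set.range x) :=
  rank_esymm_omit_matrix_general r x s
end

section
/- Let k be an algebraically closed field and let m ≥ 2, n ≥ 4, and 1 ≤ h ≤ n − 3 be integers. Let I_{m,n,h} be the ideal of the polynomial ring k[z_{i,j} : 1 ≤ i ≤ m, 1 ≤ j ≤ n] generated by the (m−1)(n−h−1) polynomials e_n^j(z_{1,1}, …, z_{1,n}) − e_n^j(z_{i,1}, …, z_{i,n}) for 2 ≤ i ≤ m and 1 ≤ j ≤ n − h − 1. Then the Krull dimension of the quotient ring k[z_{i,j}] / I_{m,n,h} equals n + (m−1)(h+1). -/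
/-!
Modulo the ideal, the elementary symmetric functions `e_1, …, e_{n-h-1}` are common to all rows,
and together with `e_{n-h}, …, e_n` of each row they are the images of the variables of a
polynomial ring `P` in `(n - h - 1) + m (h + 1)` variables. The quotient is integral over `P`,
since `z_{i,l}` is a root of `∏_{l'} (T - z_{i,l'})`, whose coefficients are the `± e_j` of
row `i`. The map from `P` is injective: any values of these coefficients in an algebraically
closed field are attained, by filling each row with the roots of the monic polynomial they
prescribe. An integral extension with injective structure map has the same Krull dimension as
its base.
-/

section IntegralExtension

variable {R S : Type*} [CommRing R] [CommRing S] [Algebra R S] [Algebra.IsIntegral R S]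

theorem ringKrullDim_le_of_isIntegral : ringKrullDim S ≤ ringKrullDim R :=
  Order.krullDim_le_of_strictMono (PrimeSpectrum.comap (algebraMap R S)) fun p q hpq => by
    obtain ⟨x, hxq, hxp⟩ := SetLike.exists_of_lt (show p.asIdeal < q.asIdeal from hpq)
    exact Ideal.comap_lt_comap_of_integral_mem_sdiff hpq.le ⟨hxq, hxp⟩
      (Algebra.IsIntegral.isIntegral x)

theorem ringKrullDim_eq_of_isIntegral [FaithfulSMul R S] : ringKrullDim S = ringKrullDim R := by
  refine le_antisymm ringKrullDim_le_of_isIntegral (iSup_le fun l => ?_)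
  obtain ⟨⟨P, _, _⟩⟩ := Ideal.nonempty_primesOver (S := S) l.head.asIdeal
  obtain ⟨L, hL, -, -⟩ := Ideal.exists_ltSeries_of_hasGoingUp l P
  exact hL ▸ Order.LTSeries.length_le_krullDim L

end IntegralExtension

theorem Multiset.exists_fin_map_univ_eq {α : Type*} {n : ℕ} (s : Multiset α)
    (hs : Multiset.card s = n) : ∃ r : Fin n → α, Finset.univ.val.map r = s := by
  subst hs
  refine ⟨fun i => s.toList[i]'(by simp), ?_⟩
  conv_rhs => rw [← s.coe_toList]
  rw [Fin.univ_val_map]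
  congr 1
  exact List.ext_get (by simp) fun i _ _ => by simp

open Polynomial in
theorem isIntegral_of_esymm_mem_range {R A : Type*} [CommRing R] [CommRing A] [Algebra R A]
    {n : ℕ} (x : Fin n → A)
    (hx : ∀ j : Fin n, (Finset.univ.val.map x).esymm (j + 1) ∈ (algebraMap R A).range)
    (i : Fin n) : IsIntegral R (x i) := by
  nontriviality A
  set s := Finset.univ.val.map x
  have hs : Multiset.card s = n := by simp [s]
  set p : A[X] := (s.map fun t => X - C t).prod
  have hmonic : p.Monic := monic_multiset_prod_of_monic _ _ fun t _ => monic_X_sub_C t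
  have hlifts : p ∈ lifts (algebraMap R A) := by
    rw [lifts_iff_coeff_lifts]
    intro d
    rw [← RingHom.coe_range, SetLike.mem_coe]
    rcases le_or_gt d n with hd | hd
    · rw [Multiset.prod_X_sub_C_coeff s (hs ▸ hd), hs]
      refine (algebraMap R A).range.mul_mem (pow_mem (neg_mem (one_mem _)) _) ?_
      rcases Nat.eq_zero_or_eq_succ_pred (n - d) with h0 | hsucc
      · rw [h0]; simp [Multiset.esymm]
      · rw [hsucc]; exact hx ⟨(n - d).pred, by omega⟩
    · rw [coeff_eq_zero_of_natDegree_lt (by rwa [natDegree_multiset_prod_X_sub_C_eq_card, hs])]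
      exact zero_mem _
  obtain ⟨q, hq, -, hqmonic⟩ := lifts_and_natDegree_eq_and_monic hlifts hmonic
  refine ⟨q, hqmonic, ?_⟩
  rw [← eval_map, hq, eval_multiset_prod, Multiset.map_map]
  exact Multiset.prod_eq_zero (Multiset.mem_map.mpr ⟨x i, by simp [s], by simp⟩)

open Polynomial in
theorem exists_multiset_esymm_eq {L : Type*} [Field L] [IsAlgClosed L] {n : ℕ} (c : Fin n → L) :
    ∃ s : Multiset L, Multiset.card s = n ∧ ∀ j : Fin n, s.esymm (j + 1) = c j := by
  set g : L[X] := X ^ n + ∑ j : Fin n, C ((-1) ^ (j + 1 : ℕ) * c j) * X ^ (n - (j + 1))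
  have hlow : (∑ j : Fin n, C ((-1) ^ (j + 1 : ℕ) * c j) * X ^ (n - (j + 1))).degree <
      (n : WithBot ℕ) := by
    refine (degree_sum_le _ _).trans_lt ((Finset.sup_lt_iff (WithBot.bot_lt_coe n)).mpr
      fun j _ => (degree_C_mul_X_pow_le _ _).trans_lt ?_)
    exact Nat.cast_lt.mpr (by omega)
  have hmonic : g.Monic := monic_X_pow_add hlow
  have hdeg : g.natDegree = n := natDegree_eq_of_degree_eq_some
    ((degree_add_eq_left_of_degree_lt (by rwa [degree_X_pow])).trans (degree_X_pow n))
  refine ⟨g.roots, (splits_iff_card_roots.mp (IsAlgClosed.splits g)).trans hdeg, fun j => ?_⟩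
  have hcoeff : g.coeff (n - (j + 1)) = (-1) ^ (j + 1 : ℕ) * c j := by
    simp only [g, coeff_add, coeff_X_pow, finsetSum_coeff, coeff_C_mul_X_pow]
    rw [if_neg (by omega), zero_add, Finset.sum_eq_single j (fun i _ hij => if_neg ?_) (by simp),
      if_pos rfl]
    omega
  have hvieta := coeff_eq_esymm_roots_of_splits (IsAlgClosed.splits g)
    (k := n - (j + 1)) (by omega)
  rw [hdeg, hmonic.leadingCoeff, one_mul, hcoeff, Nat.sub_sub_self (by omega)] at hvieta
  exact (mul_left_cancel₀ (pow_ne_zero _ (neg_ne_zero.mpr one_ne_zero)) hvieta).symm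

open MvPolynomial

noncomputable section Cone

variable (k : Type*) [Field k]

abbrev rowEsymm (n : ℕ) {m : ℕ} (i : Fin m) (j : ℕ) : MvPolynomial (Fin m × Fin n) k :=
  rename (Prod.mk i) (esymm (Fin n) k j)

def coneIdeal (m n h : ℕ) (hm : 0 < m) : Ideal (MvPolynomial (Fin m × Fin n) k) :=
  Ideal.span {p | ∃ (i : Fin m) (j : ℕ), i ≠ ⟨0, hm⟩ ∧ 1 ≤ j ∧ j ≤ n - h - 1 ∧
    p = rename (Prod.mk (⟨0, hm⟩ : Fin m)) (esymm (Fin n) k j) -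
      rename (Prod.mk i) (esymm (Fin n) k j)}

/-- `inl j` stands for `e_{j+1}`, common to all rows modulo `coneIdeal`, and `inr (i, l)` for
`e_{n-h+l}` of row `i`. -/
abbrev ConeCoeffIdx (m n h : ℕ) : Type := Fin (n - h - 1) ⊕ Fin m × Fin (h + 1)

def coneCoeffHom (m n h : ℕ) (hm : 0 < m) :
    MvPolynomial (ConeCoeffIdx m n h) k →ₐ[k]
      MvPolynomial (Fin m × Fin n) k ⧸ coneIdeal k m n h hm :=
  aeval <| Sum.elim (fun j => Ideal.Quotient.mk _ (rowEsymm k n ⟨0, hm⟩ (j + 1)))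
    fun il => Ideal.Quotient.mk _ (rowEsymm k n il.1 (n - h + il.2))

/-- The variable standing for `e_{j+1}` of row `i`. -/
def coeffVar (h : ℕ) {m n : ℕ} (i : Fin m) (j : Fin n) : MvPolynomial (ConeCoeffIdx m n h) k :=
  if hj : (j : ℕ) < n - h - 1 then X (.inl ⟨j, hj⟩)
  else X (.inr (i, ⟨j - (n - h - 1), by omega⟩))

variable {k} {m n h : ℕ}

theorem coeffVar_of_lt {i : Fin m} {j : Fin n} (hj : (j : ℕ) < n - h - 1) :
    coeffVar k h i j = X (.inl ⟨j, hj⟩) :=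
  dif_pos hj

theorem exists_coeffVar_eq_X (hm : 0 < m) (hhn : h < n) (s : ConeCoeffIdx m n h) :
    ∃ i j, coeffVar k h i j = X s := by
  rcases s with j | ⟨i, l⟩
  · exact ⟨⟨0, hm⟩, ⟨j, by omega⟩, coeffVar_of_lt j.2⟩
  · refine ⟨i, ⟨n - h - 1 + l, by omega⟩, dif_neg (by simp) |>.trans ?_⟩
    simp

variable (hm : 0 < m)

theorem mk_rowEsymm (i : Fin m) (j : ℕ) :
    Ideal.Quotient.mk (coneIdeal k m n h hm) (rowEsymm k n i j) =
      (Finset.univ.val.map fun l => Ideal.Quotient.mk (coneIdeal k m n h hm) (X (i, l))).esymm j :=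
    by
  rw [← aeval_esymm_eq_multiset_esymm (Fin n) k, ← Ideal.Quotient.mkₐ_eq_mk k, aeval_unique
    (Ideal.Quotient.mkₐ k _), aeval_rename]
  simp only [aeval_X]
  rfl

theorem mk_rowEsymm_eq_of_le (i : Fin m) {j : ℕ} (hj1 : 1 ≤ j) (hj2 : j ≤ n - h - 1) :
    Ideal.Quotient.mk (coneIdeal k m n h hm) (rowEsymm k n i j) =
      Ideal.Quotient.mk (coneIdeal k m n h hm) (rowEsymm k n ⟨0, hm⟩ j) := by
  obtain rfl | hi := eq_or_ne i ⟨0, hm⟩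
  · rfl
  · refine (Ideal.Quotient.eq.mpr (Ideal.subset_span ?_)).symm
    exact ⟨i, j, hi, hj1, hj2, rfl⟩

theorem coneCoeffHom_coeffVar (hhn : h < n) (i : Fin m) (j : Fin n) :
    coneCoeffHom k m n h hm (coeffVar k h i j) =
      Ideal.Quotient.mk (coneIdeal k m n h hm) (rowEsymm k n i (j + 1)) := by
  unfold coeffVar
  split_ifs with hj
  · rw [coneCoeffHom, aeval_X, Sum.elim_inl, mk_rowEsymm_eq_of_le hm i (by omega) (by omega)]
  · rw [coneCoeffHom, aeval_X, Sum.elim_inr]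
    congr 2
    dsimp only
    omega

theorem coneCoeffHom_isIntegral (hhn : h < n) :
    (coneCoeffHom k m n h hm).toRingHom.IsIntegral := by
  let := (coneCoeffHom k m n h hm).toRingHom.toAlgebra
  have hX (v : Fin m × Fin n) : IsIntegral (MvPolynomial (ConeCoeffIdx m n h) k)
      (Ideal.Quotient.mk (coneIdeal k m n h hm) (X v)) :=
    isIntegral_of_esymm_mem_range (fun l => Ideal.Quotient.mk _ (X (v.1, l)))
      (fun j => RingHom.mem_range.mpr
        ⟨coeffVar k h v.1 j, (coneCoeffHom_coeffVar hm hhn v.1 j).trans (mk_rowEsymm hm _ _)⟩)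
      v.2
  intro x
  obtain ⟨p, rfl⟩ := Ideal.Quotient.mk_surjective x
  induction p using MvPolynomial.induction_on with
  | C a => exact ((coneCoeffHom k m n h hm).commutes a).symm ▸ isIntegral_algebraMap
  | add p q hp hq => rw [map_add]; exact hp.add _ hq
  | mul_X p v hp => rw [map_mul]; exact hp.mul _ (hX v)

theorem exists_algHom_comp_coneCoeffHom_eq (hhn : h < n) {L : Type*} [Field L] [IsAlgClosed L]
    [Algebra k L] (ρ : MvPolynomial (ConeCoeffIdx m n h) k →ₐ[k] L) :
    ∃ χ : (MvPolynomial (Fin m × Fin n) k ⧸ coneIdeal k m n h hm) →ₐ[k] L,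
      χ.comp (coneCoeffHom k m n h hm) = ρ := by
  choose s hs_card hs_esymm using
    fun i => exists_multiset_esymm_eq (L := L) fun j => ρ (coeffVar k h i j)
  choose r hr using fun i => Multiset.exists_fin_map_univ_eq (s i) (hs_card i)
  let χ₀ : MvPolynomial (Fin m × Fin n) k →ₐ[k] L := aeval fun v => r v.1 v.2
  have hχ₀ (i : Fin m) (j : Fin n) : χ₀ (rowEsymm k n i (j + 1)) = ρ (coeffVar k h i j) := by
    rw [aeval_rename, aeval_esymm_eq_multiset_esymm]
    exact (congrArg (Multiset.esymm · _) (hr i)).trans (hs_esymm i j)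
  have hker : coneIdeal k m n h hm ≤ RingHom.ker χ₀ := by
    refine Ideal.span_le.mpr ?_
    rintro _ ⟨i, j, -, hj1, hj2, rfl⟩
    obtain ⟨j, rfl⟩ : ∃ j' : Fin n, j = j' + 1 := ⟨⟨j - 1, by omega⟩, by simp; omega⟩
    simp only [SetLike.mem_coe, RingHom.mem_ker, map_sub]
    rw [hχ₀, hχ₀, coeffVar_of_lt (by omega), coeffVar_of_lt (by omega), sub_self]
  refine ⟨Ideal.Quotient.liftₐ _ χ₀ fun a ha => hker ha, algHom_ext fun s => ?_⟩
  obtain ⟨i, j, hs⟩ := exists_coeffVar_eq_X (k := k) hm hhn s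
  rw [← hs, AlgHom.comp_apply, coneCoeffHom_coeffVar hm hhn]
  exact hχ₀ i j

theorem coneCoeffHom_injective (hhn : h < n) : Function.Injective (coneCoeffHom k m n h hm) := by
  let L := AlgebraicClosure (FractionRing (MvPolynomial (ConeCoeffIdx m n h) k))
  obtain ⟨χ, hχ⟩ := exists_algHom_comp_coneCoeffHom_eq hm hhn
    (IsScalarTower.toAlgHom k (MvPolynomial (ConeCoeffIdx m n h) k) L)
  refine .of_comp (f := χ) ?_
  rw [← AlgHom.coe_comp, hχ]
  exact (algebraMap (FractionRing (MvPolynomial (ConeCoeffIdx m n h) k)) L).injective.comp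
    (IsFractionRing.injective _ _)

theorem ringKrullDim_quotient_coneIdeal (hhn : h < n) :
    ringKrullDim (MvPolynomial (Fin m × Fin n) k ⧸ coneIdeal k m n h hm) =
      (n - h - 1 + m * (h + 1) : ℕ) := by
  let := (coneCoeffHom k m n h hm).toRingHom.toAlgebra
  have : Algebra.IsIntegral (MvPolynomial (ConeCoeffIdx m n h) k) _ :=
    ⟨coneCoeffHom_isIntegral hm hhn⟩
  have : FaithfulSMul (MvPolynomial (ConeCoeffIdx m n h) k)
      (MvPolynomial (Fin m × Fin n) k ⧸ coneIdeal k m n h hm) :=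
    (faithfulSMul_iff_algebraMap_injective _ _).mpr (coneCoeffHom_injective hm hhn)
  rw [ringKrullDim_eq_of_isIntegral (R := MvPolynomial (ConeCoeffIdx m n h) k),
    MvPolynomial.ringKrullDim_of_isNoetherianRing, ringKrullDim_eq_zero_of_field]
  simp

end Cone

/-- The affine coordinate ring of the affine cone `Y_{m,n,h}`, i.e. the
quotient of `k[z_{i,j}]` by the ideal generated by
`e_n^j(z_{1,•}) - e_n^j(z_{i,•})` for `2 ≤ i ≤ m`, `1 ≤ j ≤ n - h - 1`, has Krull dimension
`n + (m - 1)(h + 1)`. Here row `1` is indexed by `⟨0, _⟩ : Fin m` and rows `2, …, m` by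
the indices `i ≠ ⟨0, _⟩`. -/
theorem krullDim_coneShortIntervals {k : Type*} [Field k] (m n h : ℕ)
    (hm : 2 ≤ m) (hn : 4 ≤ n) (hh2 : h ≤ n - 3) :
    ringKrullDim (MvPolynomial (Fin m × Fin n) k ⧸
      Ideal.span {p : MvPolynomial (Fin m × Fin n) k | ∃ (i : Fin m) (j : ℕ),
        i ≠ ⟨0, by omega⟩ ∧ 1 ≤ j ∧ j ≤ n - h - 1 ∧
        p = MvPolynomial.rename (Prod.mk (⟨0, by omega⟩ : Fin m)) (MvPolynomial.esymm (Fin n) k j) -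
            MvPolynomial.rename (Prod.mk i) (MvPolynomial.esymm (Fin n) k j)}) =
      (n + (m - 1) * (h + 1) : ℕ) := by
  obtain ⟨m, rfl⟩ : ∃ m', m = m' + 1 := ⟨m - 1, by omega⟩
  have hdim := ringKrullDim_quotient_coneIdeal (k := k) (m := m + 1) (n := n) (h := h)
    (by omega) (by omega)
  rwa [show n - h - 1 + (m + 1) * (h + 1) = n + (m + 1 - 1) * (h + 1) by
    rw [Nat.add_sub_cancel, add_mul, one_mul]; omega] at hdim
end

section
/- Let k be an algebraically closed field of characteristic 0 or of characteristic greater than n, and let 1 ≤ s ≤ t ≤ n be integers. Fix constants c_1, …, c_t ∈ k. Then the set of tuples (w_1, …, w_n) ∈ k^n such that the set {w_1, …, w_n} has at most s distinct elements and e_n^j(w_1, …, w_n) = c_j for every 1 ≤ j ≤ t, is a finite set. -/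
/-!
By Newton's identities the first `t` elementary symmetric values fix the first `t` power sums.
A tuple with `r ≤ s ≤ t` distinct values `x_1, …, x_r`, taken `m_1, …, m_r` times, therefore solves
the weighted power-sum system `∑ m_l x_l ^ j = d_j` for `1 ≤ j ≤ r`, and there are finitely many
multiplicity patterns. The characteristic assumption makes every nonempty partial sum of the `m_l`
nonzero, so by Vandermonde the homogeneous system has only the trivial solution. The Nullstellensatz
then puts a power of each variable into the ideal of the weighted power sums; taking homogeneous
components, each `X_l ^ N` is congruent to a polynomial of lower degree modulo the equations of the
system. Hence the coordinate ring of the solution set is finite-dimensional and has finitely many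
points.
-/

open Finset MvPolynomial

theorem sum_pow_eq_of_esymm_eq {σ R : Type*} [CommRing R] [Fintype σ] {t : ℕ} {w w' : σ → R}
    (h : ∀ j, 1 ≤ j → j ≤ t → (univ.val.map w).esymm j = (univ.val.map w').esymm j) :
    ∀ j, 1 ≤ j → j ≤ t → ∑ i, w i ^ j = ∑ i, w' i ^ j := by
  intro j
  induction j using Nat.strong_induction_on with
  | _ j ih =>
    intro h1 hjt
    have newton (v : σ → R) := congrArg (aeval v) (psum_eq_mul_esymm_sub_sum σ R j h1)
    simp only [map_sub, map_mul, map_sum, map_pow, map_neg, map_one, map_natCast,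
      aeval_esymm_eq_multiset_esymm, psum, aeval_X] at newton
    rw [newton w, newton w', h j h1 hjt]
    congr 1
    refine sum_congr rfl fun a ha => ?_
    simp only [mem_filter, HasAntidiagonal.mem_antidiagonal, Set.mem_Ioo] at ha
    rw [h a.1 (by omega) (by omega), ih a.2 (by omega) (by omega) (by omega)]

theorem eq_zero_of_forall_sum_mul_pow_eq_zero {R ι : Type*} [CommRing R] [IsDomain R]
    [Fintype ι] {m x : ι → R} (hm : ∀ u : Finset ι, u.Nonempty → ∑ l ∈ u, m l ≠ 0)
    (hx : ∀ j, 1 ≤ j → j ≤ Fintype.card ι → ∑ l, m l * x l ^ j = 0) : x = 0 := by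
  classical
  set Z := univ.image x
  set c : R → R := fun z => ∑ l with x l = z, m l
  have hZ : ∀ j, 1 ≤ j → j ≤ #Z → ∑ z ∈ Z, c z * z ^ j = 0 := by
    intro j h1 h2
    rw [← hx j h1 (h2.trans card_image_le), ← sum_fiberwise_of_maps_to (g := x) (t := Z)
      fun l _ => mem_image_of_mem x (mem_univ l)]
    refine sum_congr rfl fun z _ => ?_
    rw [sum_mul]
    exact sum_congr rfl fun l hl => by rw [(mem_filter.mp hl).2]
  -- Vandermonde, applied to the distinct values `z` of `x` with the weights `c z * z`
  have hcz : ∀ z ∈ Z, c z * z = 0 := by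
    let e := Z.equivFin.symm
    have hv := Matrix.eq_zero_of_forall_pow_sum_mul_pow_eq_zero
      (f := fun i => (e i : R)) (v := fun i => c (e i) * e i)
      (fun i i' h => e.injective (Subtype.ext h)) fun i => by
        rw [← hZ (i + 1) (by omega) i.2, ← sum_coe_sort Z, ← e.sum_comp]
        exact sum_congr rfl fun i' _ => by ring
    intro z hz
    simpa using congr_fun hv (e.symm ⟨z, hz⟩)
  ext l
  refine (mul_eq_zero.mp (hcz (x l) (mem_image_of_mem x (mem_univ l)))).resolve_left ?_
  exact hm _ ⟨l, mem_filter.mpr ⟨mem_univ l, rfl⟩⟩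

namespace MvPolynomial

section Homogeneous

variable {σ R : Type*}

attribute [local instance] MvPolynomial.gradedAlgebra in
theorem homogeneousComponent_mul_of_isHomogeneous [CommSemiring R] {g : MvPolynomial σ R}
    {i n : ℕ} (hg : g.IsHomogeneous i) (h : i ≤ n) (f : MvPolynomial σ R) :
    homogeneousComponent n (f * g) = homogeneousComponent (n - i) f * g := by
  rw [← decomposition.decompose'_apply, ← decomposition.decompose'_apply]
  exact DirectSum.coe_decompose_mul_of_right_mem_of_le (homogeneousSubmodule σ R) hg h

theorem exists_totalDegree_lt_sub_mem_span_sub_C [CommRing R] {ι : Type*} [Fintype ι]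
    {q : ι → MvPolynomial σ R} {deg : ι → ℕ} {n : ℕ} (hq : ∀ j, (q j).IsHomogeneous (deg j))
    (hn : 0 < n) (hdeg_pos : ∀ j, 0 < deg j) (hdeg_le : ∀ j, deg j ≤ n) (c : ι → R)
    {f : MvPolynomial σ R} (hf : f.IsHomogeneous n) (hf_mem : f ∈ Ideal.span (Set.range q)) :
    ∃ g : MvPolynomial σ R, g.totalDegree < n ∧
      f - g ∈ Ideal.span (Set.range fun j => q j - C (c j)) := by
  obtain ⟨a, rfl⟩ := Ideal.mem_span_range_iff_exists_fun.mp hf_mem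
  set b : ι → MvPolynomial σ R := fun j => homogeneousComponent (n - deg j) (a j)
  have hsum : ∑ j, a j * q j = ∑ j, b j * q j := by
    rw [← homogeneousComponent_eq_self hf, map_sum]
    exact sum_congr rfl fun j _ =>
      homogeneousComponent_mul_of_isHomogeneous (hq j) (hdeg_le j) _
  refine ⟨∑ j, b j * C (c j), ?_, ?_⟩
  · refine (totalDegree_finsetSum _ _).trans_lt <| (Finset.sup_lt_iff hn).mpr fun j _ => ?_
    have hbj : (b j * C (c j)).IsHomogeneous (n - deg j + 0) :=
      (homogeneousComponent_isHomogeneous _ _).mul (isHomogeneous_C _ _)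
    exact hbj.totalDegree_le.trans_lt (by have := hdeg_pos j; omega)
  · rw [hsum, ← sum_sub_distrib]
    refine Ideal.sum_mem _ fun j _ => ?_
    rw [← mul_sub]
    exact Ideal.mul_mem_left _ _ (Ideal.subset_span ⟨j, rfl⟩)

end Homogeneous

section Quotient

variable {σ k : Type*} [Field k]

theorem mkₐ_mem_of_forall_monomial_mem {I : Ideal (MvPolynomial σ k)}
    {V : Submodule k (MvPolynomial σ k ⧸ I)} {f : MvPolynomial σ k}
    (hf : ∀ α ∈ f.support, Ideal.Quotient.mkₐ k I (monomial α (coeff α f)) ∈ V) :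
    Ideal.Quotient.mkₐ k I f ∈ V := by
  rw [← f.support_sum_monomial_coeff, map_sum]
  exact Submodule.sum_mem _ hf

theorem finite_quotient_of_X_pow_sub_mem [Finite σ] (I : Ideal (MvPolynomial σ k))
    (N : σ → ℕ) (g : σ → MvPolynomial σ k) (hg : ∀ l, (g l).totalDegree < N l)
    (hI : ∀ l, X l ^ N l - g l ∈ I) :
    Module.Finite k (MvPolynomial σ k ⧸ I) := by
  set B : Set (σ →₀ ℕ) := {α | ∀ l, α l < N l}
  have hB : B.Finite := by
    have : Fintype σ := Fintype.ofFinite σ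
    refine (Set.Finite.pi (t := fun l => Set.Iio (N l)) fun l => Set.finite_Iio _).preimage
      (Finsupp.equivFunOnFinite.injective.injOn) |>.subset fun α hα l _ => hα l
  set mk := Ideal.Quotient.mkₐ k I
  set V : Submodule k (MvPolynomial σ k ⧸ I) := Submodule.span k ((fun α => mk (monomial α 1)) '' B)
  have hmonomial : ∀ d, ∀ α : σ →₀ ℕ, α.degree = d → ∀ c : k, mk (monomial α c) ∈ V := by
    intro d
    induction d using Nat.strong_induction_on with
    | _ d ih =>
      rintro α rfl c
      by_cases hα : α ∈ B
      · rw [← mul_one c, ← smul_eq_mul, ← smul_monomial, map_smul]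
        exact Submodule.smul_mem _ _ (Submodule.subset_span ⟨α, hα, rfl⟩)
      obtain ⟨l, hl⟩ : ∃ l, N l ≤ α l := by simpa [B] using hα
      obtain ⟨β, rfl⟩ : ∃ β, α = β + Finsupp.single l (N l) :=
        ⟨α - Finsupp.single l (N l), (tsub_add_cancel_of_le (Finsupp.single_le_iff.mpr hl)).symm⟩
      have hcongr : mk (monomial (β + Finsupp.single l (N l)) c) = mk (monomial β c * g l) := by
        rw [Ideal.Quotient.mkₐ_eq_mk, Ideal.Quotient.mk_eq_mk_iff_sub_mem, ← mul_one c,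
          ← monomial_mul, ← X_pow_eq_monomial, mul_one, ← mul_sub]
        exact Ideal.mul_mem_left _ _ (hI l)
      rw [hcongr]
      refine mkₐ_mem_of_forall_monomial_mem fun γ hγ => ih _ ?_ γ rfl _
      calc γ.degree ≤ (monomial β c * g l).totalDegree := le_totalDegree hγ
        _ ≤ (monomial β c).totalDegree + (g l).totalDegree := totalDegree_mul _ _
        _ < β.degree + N l := add_lt_add_of_le_of_lt (totalDegree_monomial_le β c) (hg l)
        _ = (β + Finsupp.single l (N l)).degree := by rw [map_add, Finsupp.degree_single]
  have htop : V = ⊤ := by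
    refine eq_top_iff.mpr fun a _ => ?_
    obtain ⟨f, rfl⟩ := Ideal.Quotient.mkₐ_surjective k I a
    exact mkₐ_mem_of_forall_monomial_mem fun α _ => hmonomial _ α rfl _
  exact ⟨Submodule.fg_def.mpr ⟨_, hB.image _, htop⟩⟩

theorem finite_zeroLocus_of_finite_quotient (I : Ideal (MvPolynomial σ k))
    [Module.Finite k (MvPolynomial σ k ⧸ I)] : (zeroLocus k I).Finite := by
  -- zeros inject into the characters of `k[X] ⧸ I`; a finite-dimensional algebra has finitely many
  let χ (x : zeroLocus k I) : (MvPolynomial σ k ⧸ I) →ₐ[k] k :=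
    Ideal.Quotient.liftₐ I (aeval x.1) (mem_zeroLocus_iff.mp x.2)
  have hχ (x : zeroLocus k I) (l : σ) : χ x (Ideal.Quotient.mk I (X l)) = x.1 l := by
    simp [χ]
  refine Set.finite_coe_iff.mp (Finite.of_injective χ fun x y hxy => ?_)
  ext l
  rw [← hχ, ← hχ, hxy]

end Quotient

section WeightedPsum

variable {σ R : Type*} [CommSemiring R] [Fintype σ]

noncomputable def weightedPsum (m : σ → R) (j : ℕ) : MvPolynomial σ R :=
  ∑ l, C (m l) * X l ^ j

theorem isHomogeneous_weightedPsum (m : σ → R) (j : ℕ) : (weightedPsum m j).IsHomogeneous j :=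
  IsHomogeneous.sum _ _ _ fun _ _ => isHomogeneous_C_mul_X_pow _ _ _

@[simp]
theorem eval_weightedPsum (m : σ → R) (j : ℕ) (x : σ → R) :
    eval x (weightedPsum m j) = ∑ l, m l * x l ^ j := by
  simp [weightedPsum]

end WeightedPsum

end MvPolynomial

theorem finite_setOf_forall_sum_mul_pow_eq {k ι : Type*} [Field k] [IsAlgClosed k] [Fintype ι]
    {m : ι → k} (hm : ∀ u : Finset ι, u.Nonempty → ∑ l ∈ u, m l ≠ 0) (d : ℕ → k) :
    {x : ι → k | ∀ j, 1 ≤ j → j ≤ Fintype.card ι → ∑ l, m l * x l ^ j = d j}.Finite := by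
  set r := Fintype.card ι
  let q (j : Icc 1 r) : MvPolynomial ι k := weightedPsum m j
  let I := Ideal.span (Set.range fun j => q j - C (d j))
  have hrad (l : ι) : X l ∈ (Ideal.span (Set.range q)).radical := by
    rw [← vanishingIdeal_zeroLocus_eq_radical (K := k), mem_vanishingIdeal_iff]
    intro x hx
    suffices x = 0 by simp [this]
    refine eq_zero_of_forall_sum_mul_pow_eq_zero hm fun j h1 h2 => ?_
    simpa [q] using hx _ (Ideal.subset_span ⟨⟨j, mem_Icc.mpr ⟨h1, h2⟩⟩, rfl⟩)
  have hred (l : ι) : ∃ N, ∃ g : MvPolynomial ι k, g.totalDegree < N ∧ X l ^ N - g ∈ I := by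
    obtain ⟨p, hp⟩ := hrad l
    exact ⟨p + r + 1, exists_totalDegree_lt_sub_mem_span_sub_C (q := q) (deg := fun j => j)
      (fun j => isHomogeneous_weightedPsum m j) (Nat.succ_pos _) (fun j => (mem_Icc.mp j.2).1)
      (fun j => by have := (mem_Icc.mp j.2).2; omega) (fun j => d j)
      (isHomogeneous_X_pow l _) (Ideal.pow_mem_of_pow_mem _ hp (by omega))⟩
  choose N g hg hI using hred
  have := finite_quotient_of_X_pow_sub_mem I N g hg hI
  refine (finite_zeroLocus_of_finite_quotient I).subset fun x hx => ?_
  have hker : I ≤ RingHom.ker (aeval x) := by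
    refine Ideal.span_le.mpr ?_
    rintro - ⟨j, rfl⟩
    have hj := mem_Icc.mp j.2
    simpa [q, sub_eq_zero] using hx j hj.1 hj.2
  exact fun p hp => hker hp

theorem exists_surjective_comp_eq {α β : Type*} [Finite α] (w : α → β) :
    ∃ σ : α → Fin (Set.range w).ncard, σ.Surjective ∧ ∃ x, x ∘ σ = w := by
  let e : Set.range w ≃ Fin (Set.range w).ncard := Finite.equivFin _
  exact ⟨e ∘ Set.rangeFactorization w, e.surjective.comp Set.rangeFactorization_surjective,
    Subtype.val ∘ e.symm, funext fun i => by simp [Set.rangeFactorization]⟩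

theorem sum_comp_pow_eq_sum_card_fiber_mul {α ι R : Type*} [Fintype α] [Fintype ι]
    [DecidableEq ι] [CommSemiring R] (σ : α → ι) (x : ι → R) (j : ℕ) :
    ∑ i, x (σ i) ^ j = ∑ l, (#{i | σ i = l} : R) * x l ^ j := by
  rw [← sum_fiberwise' univ σ (fun l => x l ^ j)]
  simp [sum_const, nsmul_eq_mul]

theorem sum_card_fiber_ne_zero {k ι : Type*} [Ring k] [DecidableEq ι] {n : ℕ}
    (hchar : ringChar k = 0 ∨ n < ringChar k) {σ : Fin n → ι} (hσ : σ.Surjective)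
    {u : Finset ι} (hu : u.Nonempty) : ∑ l ∈ u, (#{i | σ i = l} : k) ≠ 0 := by
  rw [← Nat.cast_sum, sum_card_fiberwise_eq_card_filter, Ne, CharP.cast_eq_zero_iff k (ringChar k)]
  obtain ⟨l, hl⟩ := hu
  obtain ⟨i, rfl⟩ := hσ l
  have hpos : 0 < #{i' | σ i' ∈ u} := card_pos.mpr ⟨i, by simpa using hl⟩
  have hle : #{i' | σ i' ∈ u} ≤ n := (card_filter_le _ _).trans (by simp)
  rcases hchar with h | h
  · simpa [h] using hpos.ne'
  · exact fun hdvd => absurd (Nat.le_of_dvd hpos hdvd) (by omega)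

theorem finite_repeatedRoots_fixedEsymm_general {k : Type*} [Field k] [IsAlgClosed k] (n s t : ℕ)
    (hchar : ringChar k = 0 ∨ n < ringChar k)
    (hst : s ≤ t) (c : ℕ → k) :
    {w : Fin n → k | Set.ncard (Set.range w) ≤ s ∧
      ∀ j : ℕ, 1 ≤ j → j ≤ t → (Finset.univ.val.map w).esymm j = c j}.Finite := by
  set S := {w : Fin n → k | Set.ncard (Set.range w) ≤ s ∧
      ∀ j : ℕ, 1 ≤ j → j ≤ t → (Finset.univ.val.map w).esymm j = c j}
  rcases S.eq_empty_or_nonempty with hS | ⟨w₀, -, hw₀⟩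
  · exact hS ▸ Set.finite_empty
  -- every `w` in the set is `x ∘ σ` for a surjection `σ` onto `r ≤ s` points
  let piece (r : ℕ) (σ : {σ : Fin n → Fin r // σ.Surjective}) : Set (Fin n → k) :=
    (· ∘ σ.1) '' {x | ∀ j, 1 ≤ j → j ≤ Fintype.card (Fin r) →
      ∑ l, (#{i | σ.1 i = l} : k) * x l ^ j = ∑ i, w₀ i ^ j}
  refine Set.Finite.subset (s := ⋃ r ∈ Set.Iic s, ⋃ σ, piece r σ)
    ((Set.finite_Iic s).biUnion fun r _ => Set.finite_iUnion fun σ =>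
      (finite_setOf_forall_sum_mul_pow_eq (fun _ => sum_card_fiber_ne_zero hchar σ.2) _).image _)
    ?_
  rintro w ⟨hw_card, hw⟩
  obtain ⟨σ, hσ, x, hx⟩ := exists_surjective_comp_eq w
  refine Set.mem_biUnion hw_card (Set.mem_iUnion.mpr ⟨⟨σ, hσ⟩, x, fun j h1 hj => ?_, hx⟩)
  rw [Fintype.card_fin] at hj
  rw [← sum_comp_pow_eq_sum_card_fiber_mul, ← sum_pow_eq_of_esymm_eq
    (fun j h1 hj => (hw j h1 hj).trans (hw₀ j h1 hj).symm) j h1 (by omega)]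
  exact sum_congr rfl fun i _ => congrArg (· ^ j) (congrFun hx i)

/-- Over an algebraically closed field of characteristic `0` or `> n`, for
`1 ≤ s ≤ t ≤ n` and constants `c 1, …, c t`, the locus of `n`-tuples `w` with at most `s`
distinct coordinates and `e_n^j(w) = c j` for `1 ≤ j ≤ t` is finite. -/
theorem finite_repeatedRoots_fixedEsymm {k : Type*} [Field k] [IsAlgClosed k] (n s t : ℕ)
    (hchar : ringChar k = 0 ∨ n < ringChar k)
    (hs : 1 ≤ s) (hst : s ≤ t) (htn : t ≤ n) (c : ℕ → k) :
    {w : Fin n → k | Set.ncard (Set.range w) ≤ s ∧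
      ∀ j : ℕ, 1 ≤ j → j ≤ t → (Finset.univ.val.map w).esymm j = c j}.Finite :=
  finite_repeatedRoots_fixedEsymm_general n s t hchar hst c
end

section
/- Let F be a finite field with q elements and let n ≥ 1. Then the sum of Λ(f) over all monic polynomials f of degree n in F[x] equals q^n. -/
open scoped Classical

/-- The von Mangoldt function for polynomials over a field: `Λ f = deg g` if `f = g ^ k` for
some irreducible `g` and some `k ≥ 1`, and `Λ f = 0` otherwise. (For `f` a prime power, the
degree of the irreducible `g` is independent of the choice of witness.) -/
noncomputable def polyVonMangoldt {F : Type*} [Field F] (f : Polynomial F) : ℕ :=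
  if h : ∃ g : Polynomial F, Irreducible g ∧ ∃ k : ℕ, 1 ≤ k ∧ f = g ^ k
  then h.choose.natDegree else 0

/-- The monic polynomial `X ^ n + ∑_{j < n} c j * X ^ j`; as `c` ranges over `Fin n → F`
this enumerates the monic polynomials of degree `n` exactly once. -/
noncomputable def monicOfCoeffs {F : Type*} [Field F] (n : ℕ) (c : Fin n → F) : Polynomial F :=
  Polynomial.X ^ n + ∑ j : Fin n, Polynomial.C (c j) * Polynomial.X ^ (j : ℕ)

open Polynomial

section Aux

lemma PPT.pow_one_of {q n : ℕ} (hq : 2 ≤ q) (h : q ^ n = 1) : n = 0 := by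
  by_contra hne
  have := Nat.one_lt_pow hne (by omega : 1 < q)
  omega

lemma PPT.nat_aux {q d n : ℕ} (hq : 2 ≤ q) (h : q ^ d - 1 ∣ q ^ n - 1) : d ∣ n := by
  rcases Nat.eq_zero_or_pos d with rfl | hd
  · simp at h
    have h1 : 1 ≤ q ^ n := Nat.one_le_pow _ _ (by omega)
    have : q ^ n = 1 := by omega
    simp [PPT.pow_one_of hq this]
  · have key : q ^ d - 1 ∣ q ^ (n % d) - 1 := by
      have h1 : q ^ d - 1 ∣ q ^ (d * (n / d)) - 1 := by
        have := Nat.sub_dvd_pow_sub_pow (q ^ d) 1 (n / d)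
        simpa [← pow_mul] using this
      have hsplit : q ^ n - 1 = (q ^ (d * (n / d)) - 1) * q ^ (n % d) + (q ^ (n % d) - 1) := by
        have h2 : 1 ≤ q ^ (d * (n / d)) := Nat.one_le_pow _ _ (by omega)
        have h3 : 1 ≤ q ^ (n % d) := Nat.one_le_pow _ _ (by omega)
        have h4 : q ^ n = q ^ (d * (n / d)) * q ^ (n % d) := by
          rw [← pow_add]; congr 1
          exact (Nat.div_add_mod n d).symm
        rw [h4, Nat.sub_mul, one_mul]
        have h5 : q ^ (n % d) ≤ q ^ (d * (n / d)) * q ^ (n % d) :=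
          Nat.le_mul_of_pos_left _ (by omega)
        omega
      rw [hsplit] at h
      exact (Nat.dvd_add_right (Dvd.dvd.mul_right h1 _)).mp h
    have hlt : q ^ (n % d) - 1 < q ^ d - 1 := by
      have h5 : q ^ (n % d) < q ^ d := Nat.pow_lt_pow_right (by omega) (Nat.mod_lt _ hd)
      have h6 : 1 ≤ q ^ (n % d) := Nat.one_le_pow _ _ (by omega)
      omega
    have h7 := Nat.eq_zero_of_dvd_of_lt key hlt
    have h8 : 1 ≤ q ^ (n % d) := Nat.one_le_pow _ _ (by omega)
    have h9 : q ^ (n % d) = 1 := by omega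
    exact Nat.dvd_of_mod_eq_zero (PPT.pow_one_of hq h9)

variable {F : Type*} [Field F]

lemma PPT.natDegree_eq_of_assoc {g h : Polynomial F} (hg0 : g ≠ 0) (hassoc : Associated g h) :
    g.natDegree = h.natDegree := by
  obtain ⟨u, rfl⟩ := hassoc
  rw [Polynomial.natDegree_mul hg0 u.isUnit.ne_zero]
  simp [Polynomial.natDegree_eq_zero_of_isUnit u.isUnit]

/-- The key divisibility criterion: a monic irreducible `P` divides `X^(q^n) - X`
iff `deg P ∣ n`. -/
lemma PPT.dvd_iff_degree_dvd [Fintype F] {P : Polynomial F} (hP : Irreducible P)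
    (n : ℕ) (hn : 1 ≤ n) :
    P ∣ (X ^ (Fintype.card F) ^ n - X) ↔ P.natDegree ∣ n := by
  classical
  set q := Fintype.card F with hq
  have hq2 : 2 ≤ q := Fintype.one_lt_card
  have hP0 : P ≠ 0 := hP.ne_zero
  haveI : Fact (Irreducible P) := ⟨hP⟩
  set K := AdjoinRoot P with hK
  let pb : PowerBasis F K := AdjoinRoot.powerBasis hP0
  haveI : Fintype K := Module.fintypeOfFintype pb.basis
  have hcard : Fintype.card K = q ^ P.natDegree := by
    rw [Module.card_fintype pb.basis, Fintype.card_fin]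
    congr 1
  set r : K := AdjoinRoot.root P with hr0
  have hdvd_iff : P ∣ (X ^ q ^ n - X) ↔ r ^ q ^ n = r := by
    rw [← AdjoinRoot.mk_eq_zero, map_sub, map_pow, sub_eq_zero]
    rfl
  rw [hdvd_iff]
  constructor
  · intro hr
    set p := ringChar F with hp
    haveI : CharP F p := ringChar.charP F
    obtain ⟨m, hpp, hqm⟩ := FiniteField.card F p
    rw [← hq] at hqm
    haveI : CharP K p := charP_of_injective_algebraMap (algebraMap F K).injective p
    haveI : Fact p.Prime := ⟨hpp⟩
    set ψ : K →+* K := iterateFrobenius K p (↑m * n) with hψ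
    have hψ_apply : ∀ x : K, ψ x = x ^ q ^ n := by
      intro x
      rw [hψ, iterateFrobenius_def, hqm, ← pow_mul]
    have hall : ∀ x : K, x ^ q ^ n = x := by
      intro x
      obtain ⟨g, rfl⟩ := AdjoinRoot.mk_surjective x
      have h1 : AdjoinRoot.mk P g = aeval r g := (AdjoinRoot.aeval_eq g).symm
      rw [h1, ← hψ_apply, aeval_def, hom_eval₂]
      have h2 : ψ.comp (algebraMap F K) = algebraMap F K := by
        ext a
        simp only [RingHom.comp_apply]
        rw [hψ_apply, ← map_pow, FiniteField.pow_card_pow]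
      have h3 : ψ r = r := by rw [hψ_apply, hr]
      rw [h2, h3, ← aeval_def]
    obtain ⟨u, hu⟩ := IsCyclic.exists_generator (α := Kˣ)
    have horder : orderOf u = q ^ P.natDegree - 1 := by
      rw [orderOf_eq_card_of_forall_mem_zpowers hu, Nat.card_eq_fintype_card,
        Fintype.card_units, hcard]
    have hu1 : u ^ (q ^ n - 1) = 1 := by
      have h4 : (u : K) ^ q ^ n = u := hall u
      have h5 : u ^ q ^ n = u := Units.ext (by push_cast [h4]; rfl)
      have h6 : 1 ≤ q ^ n := Nat.one_le_pow _ _ (by omega)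
      have h7 : u ^ (q ^ n - 1) * u = u := by
        rw [← pow_succ, Nat.sub_add_cancel h6, h5]
      have h7' : u ^ (q ^ n - 1) * u = 1 * u := by rw [h7, one_mul]
      exact mul_right_cancel h7'
    have h8 : q ^ P.natDegree - 1 ∣ q ^ n - 1 := horder ▸ orderOf_dvd_of_pow_eq_one hu1
    exact PPT.nat_aux hq2 h8
  · intro hd
    obtain ⟨m, rfl⟩ := hd
    have := FiniteField.pow_card_pow (K := K) m r
    rwa [hcard, ← pow_mul] at this

lemma PPT.degree_eq_degree_of_pow_eq_pow {g₁ g₂ : Polynomial F} {k₁ k₂ : ℕ}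
    (h₁ : Irreducible g₁) (h₂ : Irreducible g₂) (hk₂ : 1 ≤ k₂) (h : g₁ ^ k₁ = g₂ ^ k₂) :
    g₁.natDegree = g₂.natDegree := by
  have hp : Prime g₁ := h₁.prime
  have hk₁ : k₁ ≠ 0 := by
    rintro rfl
    rw [pow_zero] at h
    exact h₂.not_isUnit (isUnit_of_dvd_one (h ▸ dvd_pow_self g₂ (by omega)))
  have hdvd : g₁ ∣ g₂ ^ k₂ := h ▸ dvd_pow_self g₁ hk₁
  have hdvd2 : g₁ ∣ g₂ := hp.dvd_of_dvd_pow hdvd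
  exact PPT.natDegree_eq_of_assoc h₁.ne_zero (h₁.associated_of_dvd h₂ hdvd2)

lemma PPT.polyVonMangoldt_pow {g : Polynomial F} (hg : Irreducible g)
    {k : ℕ} (hk : 1 ≤ k) : polyVonMangoldt (g ^ k) = g.natDegree := by
  have h : ∃ g' : Polynomial F, Irreducible g' ∧ ∃ k' : ℕ, 1 ≤ k' ∧ g ^ k = g' ^ k' :=
    ⟨g, hg, k, hk, rfl⟩
  rw [polyVonMangoldt, dif_pos h]
  obtain ⟨hirr, k', hk', heq⟩ := h.choose_spec
  exact PPT.degree_eq_degree_of_pow_eq_pow hirr hg hk heq.symm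

/-- Normalizing the base of a monic prime power. -/
lemma PPT.exists_monic_base {f g : Polynomial F} (hf : f.Monic) (hg : Irreducible g)
    {k : ℕ} (heq : f = g ^ k) :
    ∃ P : Polynomial F, Irreducible P ∧ P.Monic ∧ P ^ k = f := by
  set u := g.leadingCoeff with hu
  have hu0 : u ≠ 0 := leadingCoeff_ne_zero.mpr hg.ne_zero
  have huk : u ^ k = 1 := by
    have := hf
    rw [heq] at this
    have h2 := this.leadingCoeff
    rwa [leadingCoeff_pow] at h2
  refine ⟨C u⁻¹ * g, ?_, ?_, ?_⟩
  · have hunit : IsUnit (C u⁻¹) := isUnit_C.mpr (isUnit_iff_ne_zero.mpr (inv_ne_zero hu0))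
    have hassoc : Associated g (C u⁻¹ * g) := ⟨hunit.unit, by rw [IsUnit.unit_spec, mul_comm]⟩
    exact hassoc.irreducible hg
  · have : (C u⁻¹ * g).leadingCoeff = u⁻¹ * u := by
      rw [leadingCoeff_mul, leadingCoeff_C]
    rw [Monic, this, inv_mul_cancel₀ hu0]
  · rw [mul_pow, ← C_pow, inv_pow, huk, inv_one, map_one, one_mul, heq]

lemma PPT.monicOfCoeffs_degree_sum_lt (n : ℕ) (c : Fin n → F) :
    (∑ j : Fin n, C (c j) * X ^ (j : ℕ)).degree < (n : WithBot ℕ) := by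
  apply lt_of_le_of_lt (degree_sum_le _ _)
  rw [Finset.sup_lt_iff (by exact_mod_cast WithBot.bot_lt_coe n)]
  intro j _
  apply lt_of_le_of_lt (degree_mul_le _ _)
  apply lt_of_le_of_lt (add_le_add degree_C_le (degree_X_pow (j : ℕ)).le)
  rw [zero_add]
  exact_mod_cast j.2

lemma PPT.monicOfCoeffs_coeff (n : ℕ) (c : Fin n → F) (i : ℕ) :
    (monicOfCoeffs n c).coeff i =
      if h : i < n then c ⟨i, h⟩ else if i = n then 1 else 0 := by
  rw [monicOfCoeffs, coeff_add, coeff_X_pow, finset_sum_coeff]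
  have key : ∀ j : Fin n, (C (c j) * X ^ (j : ℕ)).coeff i = if i = (j : ℕ) then c j else 0 := by
    intro j
    rw [coeff_C_mul, coeff_X_pow]
    split_ifs <;> simp
  rw [Finset.sum_congr rfl fun j _ => key j]
  by_cases h1 : i < n
  · have h2 : i ≠ n := by omega
    rw [dif_pos h1, if_neg h2, zero_add]
    rw [Finset.sum_eq_single (⟨i, h1⟩ : Fin n)]
    · simp
    · intro b _ hb
      rw [if_neg]
      intro hh
      exact hb (Fin.ext hh.symm)
    · intro habs; exact absurd (Finset.mem_univ _) habs
  · rw [dif_neg h1]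
    have hz : (∑ j : Fin n, if i = (j : ℕ) then c j else 0) = 0 := by
      apply Finset.sum_eq_zero
      intro j _
      rw [if_neg]
      have := j.2
      omega
    rw [hz, add_zero]

lemma PPT.monic_monicOfCoeffs (n : ℕ) (c : Fin n → F) : (monicOfCoeffs n c).Monic :=
  monic_X_pow_add (PPT.monicOfCoeffs_degree_sum_lt n c)

lemma PPT.natDegree_monicOfCoeffs (n : ℕ) (c : Fin n → F) :
    (monicOfCoeffs n c).natDegree = n := by
  apply natDegree_eq_of_degree_eq_some
  rw [monicOfCoeffs,
    degree_add_eq_left_of_degree_lt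
      (by rw [degree_X_pow]; exact PPT.monicOfCoeffs_degree_sum_lt n c)]
  exact degree_X_pow n

lemma PPT.monicOfCoeffs_injective (n : ℕ) : Function.Injective (monicOfCoeffs (F := F) n) := by
  intro c d hcd
  funext j
  have h := congrArg (fun f => Polynomial.coeff f (j : ℕ)) hcd
  simpa [PPT.monicOfCoeffs_coeff, j.2] using h

lemma PPT.monicOfCoeffs_surj (n : ℕ) {f : Polynomial F} (hf : f.Monic)
    (hdeg : f.natDegree = n) : monicOfCoeffs n (fun j => f.coeff (j : ℕ)) = f := by
  ext i
  rw [PPT.monicOfCoeffs_coeff]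
  by_cases h1 : i < n
  · rw [dif_pos h1]
  · rw [dif_neg h1]
    by_cases h2 : i = n
    · rw [if_pos h2, h2, ← hdeg]
      exact (hf.coeff_natDegree).symm
    · rw [if_neg h2]
      exact (coeff_eq_zero_of_natDegree_lt (by omega)).symm

end Aux

/-- **prime polynomial theorem.** Over a finite field `F` with `q` elements,
the sum of `Λ f` over all monic polynomials `f` of degree `n` equals `q ^ n`. -/
theorem sum_polyVonMangoldt (F : Type*) [Field F] [Fintype F] (n : ℕ) (hn : 1 ≤ n) :
    ∑ c : Fin n → F, polyVonMangoldt (monicOfCoeffs n c) = Fintype.card F ^ n := by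
  classical
  set q := Fintype.card F with hq
  have hq2 : 2 ≤ q := Fintype.one_lt_card
  set Φ : Polynomial F := X ^ q ^ n - X with hΦdef
  have hΦmonic : Φ.Monic := by
    have h1 : Φ = X ^ q ^ n + (-X) := by rw [hΦdef]; ring
    rw [h1]
    apply monic_X_pow_add
    rw [degree_neg, degree_X]
    exact_mod_cast Nat.one_lt_pow (by omega) (by omega : 1 < q)
  have hΦ0 : Φ ≠ 0 := hΦmonic.ne_zero
  have hΦdeg : Φ.natDegree = q ^ n :=
    FiniteField.X_pow_card_pow_sub_X_natDegree_eq F (by omega) (by omega)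
  -- separability, hence squarefreeness
  have hsep : Φ.Separable := by
    set p := ringChar F with hp
    haveI : CharP F p := ringChar.charP F
    obtain ⟨m, hpp, hqm⟩ := FiniteField.card F p
    rw [← hq] at hqm
    have hpq : p ∣ q := hqm ▸ dvd_pow_self p m.2.ne'
    exact galois_poly_separable p (q ^ n)
      (hpq.trans (dvd_pow_self q (by omega)))
  have hsq : Squarefree Φ := hsep.squarefree
  set T : Finset (Polynomial F) :=
    (UniqueFactorizationMonoid.normalizedFactors Φ).toFinset with hT
  have hnodup : (UniqueFactorizationMonoid.normalizedFactors Φ).Nodup :=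
    (UniqueFactorizationMonoid.squarefree_iff_nodup_normalizedFactors hΦ0).mp hsq
  -- membership in T
  have hmemT : ∀ P : Polynomial F, P ∈ T ↔ Irreducible P ∧ P.Monic ∧ P.natDegree ∣ n := by
    intro P
    simp only [hT, Multiset.mem_toFinset]
    constructor
    · intro hP
      have h1 := UniqueFactorizationMonoid.irreducible_of_normalized_factor P hP
      have h2 := UniqueFactorizationMonoid.normalize_normalized_factor P hP
      have h3 : P.Monic := h2 ▸ monic_normalize h1.ne_zero
      have h4 : P ∣ Φ := UniqueFactorizationMonoid.dvd_of_mem_normalizedFactors hP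
      exact ⟨h1, h3, (PPT.dvd_iff_degree_dvd h1 n hn).mp h4⟩
    · rintro ⟨h1, h2, h3⟩
      have hdvd : P ∣ Φ := (PPT.dvd_iff_degree_dvd h1 n hn).mpr h3
      obtain ⟨Q, hQmem, hQassoc⟩ :=
        UniqueFactorizationMonoid.exists_mem_normalizedFactors_of_dvd hΦ0 h1 hdvd
      have hQirr := UniqueFactorizationMonoid.irreducible_of_normalized_factor Q hQmem
      have hQnorm := UniqueFactorizationMonoid.normalize_normalized_factor Q hQmem
      have hQmonic : Q.Monic := hQnorm ▸ monic_normalize hQirr.ne_zero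
      rwa [Polynomial.eq_of_monic_of_associated h2 hQmonic hQassoc]
  -- the degree sum over T equals q ^ n
  have hsumT : ∑ P ∈ T, P.natDegree = q ^ n := by
    have hmon : ∀ P ∈ UniqueFactorizationMonoid.normalizedFactors Φ, P.Monic := by
      intro P hP
      have h1 := UniqueFactorizationMonoid.irreducible_of_normalized_factor P hP
      have h2 := UniqueFactorizationMonoid.normalize_normalized_factor P hP
      exact h2 ▸ monic_normalize h1.ne_zero
    have hprodmonic : (UniqueFactorizationMonoid.normalizedFactors Φ).prod.Monic := by
      have := monic_multiset_prod_of_monic (UniqueFactorizationMonoid.normalizedFactors Φ)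
        id (fun i hi => hmon i hi)
      simpa using this
    have hprodeq : (UniqueFactorizationMonoid.normalizedFactors Φ).prod = Φ :=
      Polynomial.eq_of_monic_of_associated hprodmonic hΦmonic
        (UniqueFactorizationMonoid.prod_normalizedFactors hΦ0)
    have hdeg : ((UniqueFactorizationMonoid.normalizedFactors Φ).map natDegree).sum = q ^ n := by
      rw [← natDegree_multiset_prod_of_monic _ hmon, hprodeq, hΦdeg]
    rw [← hdeg, Finset.sum]
    congr 1
    rw [hT, Multiset.toFinset_val, Multiset.Nodup.dedup hnodup]
  -- rewrite the LHS as a sum over the image finset M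
  set M : Finset (Polynomial F) := Finset.image (monicOfCoeffs n) Finset.univ with hM
  have hLHS : ∑ c : Fin n → F, polyVonMangoldt (monicOfCoeffs n c)
      = ∑ f ∈ M, polyVonMangoldt f :=
    (Finset.sum_image (fun a _ b _ h => PPT.monicOfCoeffs_injective n h)).symm
  have hmemM : ∀ f : Polynomial F, f ∈ M ↔ f.Monic ∧ f.natDegree = n := by
    intro f
    simp only [hM, Finset.mem_image, Finset.mem_univ, true_and]
    constructor
    · rintro ⟨c, rfl⟩
      exact ⟨PPT.monic_monicOfCoeffs n c, PPT.natDegree_monicOfCoeffs n c⟩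
    · rintro ⟨h1, h2⟩
      exact ⟨fun j => f.coeff (j : ℕ), PPT.monicOfCoeffs_surj n h1 h2⟩
  -- restrict to prime-power polynomials
  set M' : Finset (Polynomial F) := M.filter
    (fun f => ∃ P : Polynomial F, Irreducible P ∧ P.Monic ∧ ∃ k : ℕ, 1 ≤ k ∧ f = P ^ k)
    with hM'
  have hM'sum : ∑ f ∈ M, polyVonMangoldt f = ∑ f ∈ M', polyVonMangoldt f := by
    rw [hM']
    symm
    apply Finset.sum_subset (Finset.filter_subset _ _)
    intro f hf hnf
    rw [polyVonMangoldt, dif_neg]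
    rintro ⟨g, hg, k, hk, hfgk⟩
    apply hnf
    rw [Finset.mem_filter]
    refine ⟨hf, ?_⟩
    obtain ⟨P, hPirr, hPmonic, hPk⟩ :=
      PPT.exists_monic_base ((hmemM f).mp hf).1 hg hfgk
    exact ⟨P, hPirr, hPmonic, k, hk, hPk.symm⟩
  -- final bijection between T and M'
  have hbij : ∑ P ∈ T, P.natDegree = ∑ f ∈ M', polyVonMangoldt f := by
    apply Finset.sum_bij (fun P _ => P ^ (n / P.natDegree))
    · -- maps into M'
      intro P hP
      obtain ⟨h1, h2, h3⟩ := (hmemT P).mp hP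
      have hd : 0 < P.natDegree := h1.natDegree_pos
      have hk1 : 1 ≤ n / P.natDegree := Nat.one_le_div_iff hd |>.mpr (Nat.le_of_dvd (by omega) h3)
      rw [hM', Finset.mem_filter]
      constructor
      · rw [hmemM]
        refine ⟨h2.pow _, ?_⟩
        rw [natDegree_pow, Nat.div_mul_cancel h3]
      · exact ⟨P, h1, h2, n / P.natDegree, hk1, rfl⟩
    · -- injective
      intro P₁ hP₁ P₂ hP₂ heq
      obtain ⟨h1, h2, h3⟩ := (hmemT P₁).mp hP₁
      obtain ⟨h1', h2', h3'⟩ := (hmemT P₂).mp hP₂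
      have hk' : 1 ≤ n / P₂.natDegree :=
        Nat.one_le_div_iff h1'.natDegree_pos |>.mpr (Nat.le_of_dvd (by omega) h3')
      have hdvd : P₁ ∣ P₂ ^ (n / P₂.natDegree) := heq ▸ dvd_pow_self P₁ (by
        have : 1 ≤ n / P₁.natDegree :=
          Nat.one_le_div_iff h1.natDegree_pos |>.mpr (Nat.le_of_dvd (by omega) h3)
        omega)
      have hdvd2 : P₁ ∣ P₂ := h1.prime.dvd_of_dvd_pow hdvd
      exact Polynomial.eq_of_monic_of_associated h2 h2' (h1.associated_of_dvd h1' hdvd2)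
    · -- surjective
      intro f hf
      rw [hM', Finset.mem_filter] at hf
      obtain ⟨hfM, P, h1, h2, k, hk, hfPk⟩ := hf
      have hd : 0 < P.natDegree := h1.natDegree_pos
      have hdeg : k * P.natDegree = n := by
        have := ((hmemM f).mp hfM).2
        rw [hfPk, natDegree_pow] at this
        exact this
      have h3 : P.natDegree ∣ n := Dvd.intro_left k hdeg
      refine ⟨P, (hmemT P).mpr ⟨h1, h2, h3⟩, ?_⟩
      rw [hfPk]
      congr 1
      rw [← hdeg, Nat.mul_div_cancel _ hd]
    · -- values agree
      intro P hP
      obtain ⟨h1, h2, h3⟩ := (hmemT P).mp hP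
      have hk1 : 1 ≤ n / P.natDegree :=
        Nat.one_le_div_iff h1.natDegree_pos |>.mpr (Nat.le_of_dvd (by omega) h3)
      exact (PPT.polyVonMangoldt_pow h1 hk1).symm
  rw [hLHS, hM'sum, ← hbij, hsumT]
end

section
/- Let F be a finite field with q elements, let K be an algebraic closure of F, let n ≥ 1, and let f be a monic polynomial of degree n in F[x]. Then the number of pairs ((z_1, …, z_n), σ), where (z_1, …, z_n) ∈ K^n satisfies f = ∏_{j=1}^n (x − z_j) (as polynomials over K) and σ is a permutation of {1, …, n} with z_j^q = z_{σ(j)} for all j, equals n!. -/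
/-!
Let `Sₙ` act on `Kⁿ` by permuting coordinates, `σ • z = z ∘ σ`. The tuples `z` with
`f = ∏ (X - z j)` form the orbit of one ordering `z₀` of the roots of `f`, and the Frobenius
`φ : z ↦ z ^ q` commutes with this action and maps `z₀` into its orbit, because it permutes the
roots of `f` with their multiplicities. For any action and any equivariant `φ` mapping an orbit
`O` into itself, the `g` with `g • x = φ x` form a coset of the stabilizer of `x`, so the pairs
`(x, g)` with `x ∈ O` are in bijection with `O × Stab(x₀) ≃ G` by orbit–stabilizer.
-/

open Polynomial MulAction Equiv Finset

namespace MulAction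

variable {G X : Type*} [Group G] [MulAction G X]

/-- With `x = τ • x₀` and `φ x₀ = σ₀ • x₀`, we have `g • x = φ x` iff `τ⁻¹ g⁻¹ τ σ₀` fixes `x₀`. -/
noncomputable def solutionsEquivOrbitProdStabilizer (φ : X → X)
    (hφ : ∀ (g : G) x, φ (g • x) = g • φ x) {x₀ : X} (h₀ : φ x₀ ∈ orbit G x₀) :
    {p : X × G // p.1 ∈ orbit G x₀ ∧ φ p.1 = p.2 • p.1} ≃ orbit G x₀ × stabilizer G x₀ :=
  let σ₀ := (mem_orbit_iff.1 h₀).choose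
  have hσ₀ : σ₀ • x₀ = φ x₀ := (mem_orbit_iff.1 h₀).choose_spec
  let τ : orbit G x₀ → G := fun x => (mem_orbit_iff.1 x.2).choose
  have hτ (x : orbit G x₀) : τ x • x₀ = x := (mem_orbit_iff.1 x.2).choose_spec
  have hφτ (x : orbit G x₀) : φ x = (τ x * σ₀) • x₀ := by rw [← hτ x, hφ, mul_smul, hσ₀]
  { toFun := fun ⟨⟨x, g⟩, hx, hg⟩ =>
      (⟨x, hx⟩, ⟨(τ ⟨x, hx⟩)⁻¹ * g⁻¹ * τ ⟨x, hx⟩ * σ₀, by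
        rw [mem_stabilizer_iff, mul_assoc, mul_smul, ← hφτ ⟨x, hx⟩, hg, mul_smul, inv_smul_smul,
          inv_smul_eq_iff, hτ]⟩)
    invFun := fun ⟨x, h⟩ =>
      ⟨⟨x, τ x * σ₀ * (h : G)⁻¹ * (τ x)⁻¹⟩, x.2, by
        dsimp only
        rw [hφτ, ← hτ x, ← mul_smul, inv_mul_cancel_right, mul_smul (τ x * σ₀),
          inv_smul_eq_iff.2 h.2.symm]⟩
    left_inv := fun ⟨⟨x, g⟩, hx, hg⟩ => by ext <;> simp
    right_inv := fun ⟨x, h⟩ => by ext <;> simp [mul_assoc] }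

theorem card_solutions_eq_card (φ : X → X) (hφ : ∀ (g : G) x, φ (g • x) = g • φ x) {x₀ : X}
    (h₀ : φ x₀ ∈ orbit G x₀) :
    Nat.card {p : X × G // p.1 ∈ orbit G x₀ ∧ φ p.1 = p.2 • p.1} = Nat.card G :=
  Nat.card_congr
    ((solutionsEquivOrbitProdStabilizer φ hφ h₀).trans (orbitProdStabilizerEquivGroup G x₀))

end MulAction

theorem DomMulAct.mem_orbit_perm_iff_map_univ_val_eq {ι α : Type*} [Fintype ι] {z w : ι → α} :
    w ∈ orbit (Perm ι)ᵈᵐᵃ z ↔ univ.val.map w = univ.val.map z := by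
  classical
  constructor
  · rintro ⟨σ, rfl⟩
    change univ.val.map (z ∘ (mk.symm σ : Perm ι)) = _
    rw [← Multiset.map_map, Multiset.map_univ_val_equiv]
  · intro h
    have hfiber (a : α) : Fintype.card {i // w i = a} = Fintype.card {i // z i = a} := by
      have hcount := congrArg (Multiset.count a) h
      simp only [Multiset.count_map] at hcount
      simp only [Fintype.card_subtype, eq_comm (b := a)]
      exact hcount
    exact ⟨mk (ofFiberEquiv fun a => Fintype.equivOfCardEq (hfiber a)),
      funext (ofFiberEquiv_map _)⟩

theorem Multiset.exists_map_univ_val_eq {ι α : Type*} [Fintype ι] (m : Multiset α)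
    (h : Multiset.card m = Fintype.card ι) : ∃ z : ι → α, univ.val.map z = m := by
  classical
  let e : ι ≃ m.ToType := Fintype.equivOfCardEq (by rw [Multiset.card_coe, h])
  refine ⟨(fun x : m.ToType => (x : α)) ∘ e, ?_⟩
  rw [← Multiset.map_map, Multiset.map_univ_val_equiv, Multiset.map_univ_coe]

theorem Polynomial.Splits.eq_prod_X_sub_C_iff {R ι : Type*} [CommRing R] [IsDomain R]
    [Fintype ι] {p : R[X]} (hs : p.Splits) (hm : p.Monic) (z : ι → R) :
    p = ∏ j, (X - C (z j)) ↔ univ.val.map z = p.roots := by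
  have hprod : ∏ j, (X - C (z j)) = ((univ.val.map z).map (X - C ·)).prod := by
    rw [prod_eq_multiset_prod, Multiset.map_map]
    rfl
  rw [hprod]
  exact ⟨fun h => by rw [h, roots_multiset_prod_X_sub_C],
    fun h => h ▸ hs.eq_prod_roots_of_monic hm⟩

theorem Polynomial.map_aroots_of_splits {F K L : Type*} [Field F] [Field K] [Field L]
    [Algebra F K] [Algebra F L] (φ : K →ₐ[F] L) {p : F[X]}
    (hs : (p.map (algebraMap F K)).Splits) : (p.aroots K).map φ = p.aroots L := by
  rw [aroots_def, aroots_def, ← AlgHom.coe_toRingHom, ← hs.roots_map, Polynomial.map_map,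
    AlgHom.comp_algebraMap]

theorem ncard_root_orderings_perm_general (F : Type*) [Field F] [Fintype F] (K : Type*) [Field K]
    [Algebra F K] [IsAlgClosure F K] (n : ℕ) (f : Polynomial F) (hf : f.Monic)
    (hdeg : f.natDegree = n) :
    Set.ncard {p : (Fin n → K) × Equiv.Perm (Fin n) |
        Polynomial.map (algebraMap F K) f =
          ∏ j : Fin n, (Polynomial.X - Polynomial.C (p.1 j)) ∧
        ∀ j, p.1 j ^ Fintype.card F = p.1 (p.2 j)} = n.factorial := by
  have : IsAlgClosed K := IsAlgClosure.isAlgClosed F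
  have hsplit : (f.map (algebraMap F K)).Splits := IsAlgClosed.splits _
  obtain ⟨z₀, hz₀⟩ : ∃ z₀ : Fin n → K, univ.val.map z₀ = f.aroots K :=
    (f.aroots K).exists_map_univ_val_eq <| by
      rw [aroots_def, ← hsplit.natDegree_eq_card_roots, hf.natDegree_map, hdeg, Fintype.card_fin]
  let frob := FiniteField.frobeniusAlgHom F K
  have hfrob : frob ∘ z₀ ∈ orbit (Perm (Fin n))ᵈᵐᵃ z₀ := by
    rw [DomMulAct.mem_orbit_perm_iff_map_univ_val_eq, ← Multiset.map_map, hz₀,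
      map_aroots_of_splits _ hsplit]
  calc Set.ncard _
      = Nat.card {p : (Fin n → K) × (Perm (Fin n))ᵈᵐᵃ //
          p.1 ∈ orbit (Perm (Fin n))ᵈᵐᵃ z₀ ∧ frob ∘ p.1 = p.2 • p.1} :=
        Nat.card_congr <| subtypeEquiv ((Equiv.refl _).prodCongr DomMulAct.mk) fun p => by
          rw [Set.mem_ofPred_eq, hsplit.eq_prod_X_sub_C_iff (hf.map _),
            DomMulAct.mem_orbit_perm_iff_map_univ_val_eq, hz₀, funext_iff]
          rfl
    _ = Nat.card (Perm (Fin n))ᵈᵐᵃ := card_solutions_eq_card _ (fun _ _ => rfl) hfrob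
    _ = n.factorial := by rw [← Nat.card_congr DomMulAct.mk, Nat.card_perm, Nat.card_fin]

/-- Let `F` be a finite field with `q` elements, `K` an algebraic closure
of `F`, and `f` a monic polynomial of degree `n ≥ 1` over `F`. The number of pairs
`((z 0, …, z (n-1)), σ)` with `z ∈ K^n`, `f = ∏ (X - C (z j))` over `K`, and
`z j ^ q = z (σ j)` for all `j`, equals `n!`. -/
theorem ncard_root_orderings_perm (F : Type*) [Field F] [Fintype F] (K : Type*) [Field K]
    [Algebra F K] [IsAlgClosure F K] (n : ℕ) (hn : 1 ≤ n) (f : Polynomial F) (hf : f.Monic)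
    (hdeg : f.natDegree = n) :
    Set.ncard {p : (Fin n → K) × Equiv.Perm (Fin n) |
        Polynomial.map (algebraMap F K) f =
          ∏ j : Fin n, (Polynomial.X - Polynomial.C (p.1 j)) ∧
        ∀ j, p.1 j ^ Fintype.card F = p.1 (p.2 j)} = n.factorial :=
  ncard_root_orderings_perm_general F K n f hf hdeg
end

section
/- Let F be a finite field with q elements, let K be an algebraic closure of F, let n ≥ 2, and let σ be a permutation of {1, …, n} that is a single n-cycle (a cycle whose support is all of {1, …, n}). Then for every monic polynomial f of degree n in F[x], Λ(f) equals the number of tuples (z_1, …, z_n) ∈ K^n such that f = ∏_{j=1}^n (x − z_j) (as polynomials over K) and z_j^q = z_{σ(j)} for all j. -/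
open scoped Classical

/-! If `z j ^ q = z (σ j)` for an `n`-cycle `σ`, the tuple `z` is the Frobenius orbit
`y, y ^ q, y ^ q ^ 2, …` of `y = z j₀` laid out along the cycle, and `y ^ q ^ n = y`; conversely
every such `y` gives one tuple. The orbit of `y` consists of the `d` distinct roots of its minimal
polynomial, `d ∣ n`, so over `K` the product of `X - z j` is `(minpoly F y) ^ (n / d)`. Hence
the tuples are counted by the `y ∈ K` with `f = (minpoly F y) ^ (n / d)`: there are none
unless `f = g ^ k` with `g` irreducible, and then they are the `deg g` roots of the separable
polynomial `g`. -/

open Finset Function Polynomial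

theorem Function.Periodic.prod_range_mul {M : Type*} [CommMonoid M] {f : ℕ → M} {d : ℕ}
    (hf : Periodic f d) (k : ℕ) : ∏ m ∈ range (d * k), f m = (∏ m ∈ range d, f m) ^ k := by
  induction k with
  | zero => simp
  | succ k ih =>
    rw [Nat.mul_succ, prod_range_add, ih, pow_succ]
    congr 1
    refine prod_congr rfl fun m _ => ?_
    rw [add_comm, mul_comm]
    exact hf.nat_mul k m

theorem Function.Semiconj.perm_pow_apply {α β : Type*} {σ : Equiv.Perm α} {z : α → β}
    {g : β → β} (hz : Semiconj z σ g) (m : ℕ) (x : α) : z ((σ ^ m) x) = g^[m] (z x) := by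
  rw [Equiv.Perm.coe_pow]
  exact hz.iterate_right m x

namespace Equiv.Perm.IsCycleOn

variable {α β M : Type*} [Fintype α] [CommMonoid M] {σ : Equiv.Perm α}
  (hσ : σ.IsCycleOn (univ : Finset α))
include hσ

theorem prod_univ_eq_prod_range_pow_apply (a : α) (h : α → M) :
    ∏ x, h x = ∏ m ∈ range (Fintype.card α), h ((σ ^ m) a) := by
  refine (prod_nbij (fun m => (σ ^ m) a) (fun _ _ => mem_univ _) ?_ ?_ fun _ _ => rfl).symm
  · intro m hm k hk hmk
    have := (hσ.pow_apply_eq_pow_apply (mem_univ a)).1 hmk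
    rw [card_univ] at this
    exact this.eq_of_lt_of_lt (by simpa using hm) (by simpa using hk)
  · intro x _
    obtain ⟨m, hm, rfl⟩ := hσ.exists_pow_eq (mem_univ a) (mem_univ x)
    exact ⟨m, by simpa using hm, rfl⟩

theorem injOn_eval_setOf_semiconj (a : α) (g : β → β) :
    Set.InjOn (fun z : α → β => z a) {z | Semiconj z σ g} := by
  intro z₁ hz₁ z₂ hz₂ h
  funext x
  obtain ⟨m, -, rfl⟩ := hσ.exists_pow_eq (mem_univ a) (mem_univ x)
  rw [Semiconj.perm_pow_apply hz₁, Semiconj.perm_pow_apply hz₂]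
  exact congrArg _ h

theorem exists_semiconj_apply_eq (a : α) {g : β → β} {y : β} (hy : IsPeriodicPt g (Fintype.card α) y) :
    ∃ z : α → β, Semiconj z σ g ∧ z a = y := by
  choose m _ hm using fun x => hσ.exists_pow_eq (mem_univ a) (mem_univ x)
  have iterate_eq : ∀ i j, (σ ^ i) a = (σ ^ j) a → g^[i] y = g^[j] y := by
    intro i j hij
    have := (hσ.pow_apply_eq_pow_apply (mem_univ a)).1 hij
    rw [card_univ] at this
    rw [← hy.iterate_mod_apply i, ← hy.iterate_mod_apply j, this]
  refine ⟨fun x => g^[m x] y, fun x => ?_, iterate_eq _ 0 (by rw [hm, pow_zero, one_apply])⟩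
  rw [← iterate_succ_apply' g]
  apply iterate_eq
  rw [hm, pow_succ', mul_apply, hm]

theorem ncard_setOf_eq_prod_and_semiconj [Nonempty α] (g : β → β) (h : β → M) (c : M) :
    {z : α → β | c = ∏ x, h (z x) ∧ ∀ x, g (z x) = z (σ x)}.ncard =
      {y | g^[Fintype.card α] y = y ∧ c = ∏ m ∈ range (Fintype.card α), h (g^[m] y)}.ncard := by
  obtain ⟨a⟩ := ‹Nonempty α›
  have prod_eq : ∀ z : α → β, Semiconj z σ g →
      ∏ x, h (z x) = ∏ m ∈ range (Fintype.card α), h (g^[m] (z a)) := fun z hz => by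
    rw [hσ.prod_univ_eq_prod_range_pow_apply a]
    simp only [hz.perm_pow_apply]
  have semiconj_iff : ∀ z : α → β, (∀ x, g (z x) = z (σ x)) ↔ Semiconj z σ g :=
    fun z => ⟨fun hz x => (hz x).symm, fun hz x => (hz x).symm⟩
  rw [← ((hσ.injOn_eval_setOf_semiconj a g).mono fun z hz => (semiconj_iff z).1 hz.2).ncard_image]
  congr 1
  ext y
  constructor
  · rintro ⟨z, ⟨hc, hz⟩, rfl⟩
    rw [semiconj_iff] at hz
    refine ⟨?_, hc.trans (prod_eq z hz)⟩
    show g^[_] (z a) = z a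
    rw [← hz.perm_pow_apply, ← card_univ, hσ.pow_card_apply (mem_univ a)]
  · rintro ⟨hy, hc⟩
    obtain ⟨z, hz, rfl⟩ := hσ.exists_semiconj_apply_eq a hy
    exact ⟨z, ⟨hc.trans (prod_eq z hz).symm, (semiconj_iff z).2 hz⟩, rfl⟩

end Equiv.Perm.IsCycleOn

theorem FiniteField.frobeniusAlgHom_pow_apply (F R : Type*) [Field F] [Fintype F] [CommRing R]
    [Algebra F R] (m : ℕ) (x : R) : (frobeniusAlgHom F R ^ m) x = x ^ Fintype.card F ^ m := by
  rw [AlgHom.coe_pow, coe_frobeniusAlgHom, pow_iterate]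

section FiniteField

variable {F K : Type*} [Field F] [Fintype F] [Field K] [Algebra F K] {y : K}

theorem pow_card_pow_eq_self_iff (hy : IsIntegral F y) (e : ℕ) :
    y ^ Fintype.card F ^ e = y ↔ (minpoly F y).natDegree ∣ e := by
  rw [(minpoly.irreducible hy).natDegree_dvd_iff_dvd_X_pow_card_pow_sub_X,
    Nat.card_eq_fintype_card, minpoly.dvd_iff]
  simp [sub_eq_zero]

theorem aeval_pow_card_pow_eq_zero {p : F[X]} (hp : aeval y p = 0) (m : ℕ) :
    aeval (y ^ Fintype.card F ^ m) p = 0 := by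
  rw [← FiniteField.frobeniusAlgHom_pow_apply, aeval_algHom_apply, hp, map_zero]

theorem injOn_pow_card_pow_range_natDegree_minpoly (hy : IsIntegral F y) :
    Set.InjOn (fun m => y ^ Fintype.card F ^ m) (range (minpoly F y).natDegree) := by
  intro i hi j hj hij
  wlog hle : i ≤ j generalizing i j
  · exact (this hj hi hij.symm (by omega)).symm
  have hfix : y ^ Fintype.card F ^ (j - i) = y := by
    apply (FiniteField.frobeniusAlgHom F K ^ i).toRingHom.injective
    simpa only [AlgHom.toRingHom_eq_coe, RingHom.coe_coe, FiniteField.frobeniusAlgHom_pow_apply,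
      ← pow_mul, ← pow_add, Nat.sub_add_cancel hle] using hij.symm
  have := Nat.eq_zero_of_dvd_of_lt ((pow_card_pow_eq_self_iff hy _).1 hfix)
    (by simp only [coe_range, Set.mem_Iio] at hj; omega)
  omega

theorem minpoly_map_eq_prod (hy : IsIntegral F y) :
    (minpoly F y).map (algebraMap F K) =
      ∏ m ∈ range (minpoly F y).natDegree, (X - C (y ^ Fintype.card F ^ m)) := by
  refine eq_of_monic_of_dvd_of_natDegree_le (monic_prod_of_monic _ _ fun m _ => monic_X_sub_C _)
    ((minpoly.monic hy).map _) ?_ ?_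
  · refine prod_dvd_of_coprime (fun i hi j hj hij => ?_) fun m _ => ?_
    · exact isCoprime_X_sub_C_of_isUnit_sub
        (sub_ne_zero.2 fun h => hij (injOn_pow_card_pow_range_natDegree_minpoly hy hi hj h)).isUnit
    · rw [dvd_iff_isRoot, IsRoot, eval_map_algebraMap]
      exact aeval_pow_card_pow_eq_zero (minpoly.aeval F y) m
  · rw [natDegree_map, natDegree_finsetProd_X_sub_C_eq_card, card_range]

theorem prod_range_X_sub_C_pow_card_pow (hy : IsIntegral F y) {n : ℕ}
    (hn : (minpoly F y).natDegree ∣ n) :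
    ∏ m ∈ range n, (X - C (y ^ Fintype.card F ^ m)) =
      (minpoly F y ^ (n / (minpoly F y).natDegree)).map (algebraMap F K) := by
  have hper : Periodic (fun m => X - C (y ^ Fintype.card F ^ m)) (minpoly F y).natDegree :=
    fun m => by dsimp only; rw [pow_add, pow_mul', (pow_card_pow_eq_self_iff hy _).2 dvd_rfl]
  rw [Polynomial.map_pow, minpoly_map_eq_prod hy, ← hper.prod_range_mul, Nat.mul_div_cancel' hn]

theorem pow_card_pow_eq_self_and_map_eq_prod_iff {f : F[X]} (hy : IsIntegral F y) {n : ℕ} :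
    (y ^ Fintype.card F ^ n = y ∧
        f.map (algebraMap F K) = ∏ m ∈ range n, (X - C (y ^ Fintype.card F ^ m))) ↔
      (minpoly F y).natDegree ∣ n ∧ f = minpoly F y ^ (n / (minpoly F y).natDegree) := by
  rw [pow_card_pow_eq_self_iff hy]
  refine and_congr_right fun hn => ?_
  rw [prod_range_X_sub_C_pow_card_pow hy hn]
  exact (map_injective _ (algebraMap F K).injective).eq_iff

end FiniteField

theorem natDegree_minpoly_dvd_and_eq_pow_iff {F K : Type*} [Field F] [Field K] [Algebra F K]
    {f g : F[X]} (hf : f.Monic) (hg : Irreducible g) {k : ℕ} (hk : k ≠ 0) (hfg : f = g ^ k)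
    {y : K} (hy : IsIntegral F y) :
    ((minpoly F y).natDegree ∣ f.natDegree ∧
        f = minpoly F y ^ (f.natDegree / (minpoly F y).natDegree)) ↔ aeval y g = 0 := by
  constructor
  · rintro ⟨-, hfy⟩
    have hdvd : g ∣ minpoly F y := hg.prime.dvd_of_dvd_pow (hfy ▸ hfg ▸ dvd_pow_self g hk)
    exact aeval_eq_zero_of_dvd_aeval_eq_zero
      (hg.associated_of_dvd (minpoly.irreducible hy) hdvd).symm.dvd (minpoly.aeval F y)
  · intro hgy
    have hassoc : Associated (minpoly F y) g :=
      (minpoly.irreducible hy).associated_of_dvd hg (minpoly.dvd F y hgy)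
    have hd : (minpoly F y).natDegree = g.natDegree :=
      natDegree_eq_of_degree_eq (degree_eq_degree_of_associated hassoc)
    have hfk : f.natDegree = k * g.natDegree := by rw [hfg, natDegree_pow]
    refine ⟨by rw [hd, hfk]; exact dvd_mul_left _ _, ?_⟩
    rw [hd, hfk, Nat.mul_div_cancel _ hg.natDegree_pos]
    exact eq_of_monic_of_associated hf ((minpoly.monic hy).pow k) (hfg ▸ hassoc.symm.pow_pow)

theorem not_natDegree_minpoly_dvd_and_eq_pow {F K : Type*} [Field F] [Field K] [Algebra F K]
    {f : F[X]} (hf : f.natDegree ≠ 0) (hprime : ¬∃ g : F[X], Irreducible g ∧ ∃ k, 1 ≤ k ∧ f = g ^ k)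
    {y : K} (hy : IsIntegral F y) :
    ¬((minpoly F y).natDegree ∣ f.natDegree ∧
        f = minpoly F y ^ (f.natDegree / (minpoly F y).natDegree)) := fun ⟨hd, hfy⟩ =>
  hprime ⟨_, minpoly.irreducible hy, _,
    Nat.div_pos (Nat.le_of_dvd (Nat.pos_of_ne_zero hf) hd) (minpoly.natDegree_pos hy), hfy⟩

theorem ncard_setOf_aeval_eq_zero {F K : Type*} [Field F] [PerfectField F] [Field K]
    [IsAlgClosed K] [Algebra F K] {g : F[X]} (hg : Irreducible g) :
    {y : K | aeval y g = 0}.ncard = g.natDegree := by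
  have hroots : {y : K | aeval y g = 0} = g.rootSet K := by
    ext y
    exact (mem_rootSet.trans (and_iff_right hg.ne_zero)).symm
  rw [hroots, Set.ncard_eq_toFinset_card', Set.toFinset_card,
    card_rootSet_eq_natDegree (PerfectField.separable_of_irreducible hg) (IsAlgClosed.splits _)]

/-- Let `F` be a finite field with `q` elements, `K` an algebraic closure
of `F`, `n ≥ 2`, and `σ` a single `n`-cycle in `S_n`. For every monic polynomial `f` of
degree `n` over `F`, `Λ f` equals the number of tuples `z ∈ K^n` with `f = ∏ (X - C (z j))`
over `K` and `z j ^ q = z (σ j)` for all `j`. -/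
theorem polyVonMangoldt_eq_ncard (F : Type*) [Field F] [Fintype F] (K : Type*) [Field K]
    [Algebra F K] [IsAlgClosure F K] (n : ℕ) (hn : 2 ≤ n) (σ : Equiv.Perm (Fin n))
    (hσ : σ.IsCycle) (hsupp : σ.support = Finset.univ) (f : Polynomial F) (hf : f.Monic)
    (hdeg : f.natDegree = n) :
    polyVonMangoldt f = Set.ncard {z : Fin n → K |
        Polynomial.map (algebraMap F K) f =
          ∏ j : Fin n, (Polynomial.X - Polynomial.C (z j)) ∧
        ∀ j, z j ^ Fintype.card F = z (σ j)} := by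
  have : IsAlgClosed K := IsAlgClosure.isAlgClosed F
  have hy : ∀ y : K, IsIntegral F y := Algebra.IsIntegral.isIntegral
  have hσ' : σ.IsCycleOn (univ : Finset (Fin n)) := by
    rw [← hsupp, Equiv.Perm.coe_support_eq_set_support]
    exact hσ.isCycleOn
  have : Nonempty (Fin n) := ⟨⟨0, by omega⟩⟩
  have hcount := hσ'.ncard_setOf_eq_prod_and_semiconj (· ^ Fintype.card F)
    (fun y => X - C y) (f.map (algebraMap F K))
  simp only [pow_iterate, Fintype.card_fin] at hcount
  rw [hcount]
  simp only [pow_card_pow_eq_self_and_map_eq_prod_iff (hy _), ← hdeg]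
  unfold polyVonMangoldt
  split_ifs with hprime
  · obtain ⟨hg, k, hk, hfg⟩ := hprime.choose_spec
    simp only [natDegree_minpoly_dvd_and_eq_pow_iff hf hg (by omega) hfg (hy _)]
    exact (ncard_setOf_aeval_eq_zero hg).symm
  · simp only [not_natDegree_minpoly_dvd_and_eq_pow (by omega) hprime (hy _),
      Set.ofPred_false, Set.ncard_empty]
end

section
/- Let F be a finite field with q elements, let K be an algebraic closure of F, let n ≥ 1, and let f be a monic polynomial of degree n in F[x]. Then Σ sgn(σ), where the sum is over all pairs ((z_1, …, z_n), σ) with (z_1, …, z_n) ∈ K^n satisfying f = ∏_{j=1}^n (x − z_j) (as polynomials over K) and σ a permutation of {1, …, n} with z_j^q = z_{σ(j)} for all j, equals (−1)^n · n! · μ(f). -/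
open scoped Classical

/-- The Möbius function for polynomials over a field: `μ f = (-1) ^ k` if `f` is squarefree
with exactly `k` monic irreducible factors, and `μ f = 0` otherwise. -/
noncomputable def polyMoebius {F : Type*} [Field F] (f : Polynomial F) : ℤ :=
  if Squarefree f then
    (-1) ^ Multiset.card (UniqueFactorizationMonoid.normalizedFactors f) else 0

/-!
If `f` is not squarefree, every ordering `z` of its roots repeats a root, `z i = z j`, and
`σ ↦ σ * swap i j` is a sign-reversing involution on the admissible `σ`, so the sum vanishes.
If `f` is squarefree, the orderings are the `n!` bijections from `Fin n` to the roots, and for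
each of them the only admissible `σ` is the Frobenius permutation of the roots read through `z`.
Its sign is multiplicative over the irreducible factors of `f`, and on the roots of an
irreducible factor `p` Frobenius is a single cycle of length `deg p`: its period at a root `α`
is the order of the Frobenius automorphism of `F(α) ≅ F[X]/(p)`, namely `deg p`.
-/

open Polynomial Equiv Function FiniteField UniqueFactorizationMonoid

theorem finsum_prod_eq_sum_sum {α β M : Type*} [AddCommMonoid M] [Fintype β] {g : α × β → M}
    (s : Finset α) (h : ∀ a b, g (a, b) ≠ 0 → a ∈ s) : ∑ᶠ x, g x = ∑ a ∈ s, ∑ b, g (a, b) := by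
  rw [finsum_eq_sum_of_support_subset (s := s ×ˢ Finset.univ), Finset.sum_product]
  rintro ⟨a, b⟩ hab
  simpa using h a b hab

namespace Equiv.Perm

variable {ι : Type*} [Fintype ι] [DecidableEq ι]

theorem sum_sign_eq_zero_of_not_injective {α : Type*} (φ : α → α) {z : ι → α}
    (hz : ¬ Injective z) :
    ∑ σ : Perm ι, (if ∀ j, φ (z j) = z (σ j) then (sign σ : ℤ) else 0) = 0 := by
  obtain ⟨i, j, hzij, hij⟩ : ∃ i j, z i = z j ∧ i ≠ j := by
    simpa [Injective] using hz
  have hz_swap (k : ι) : z (swap i j k) = z k := by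
    rw [← comp_apply (f := z), comp_swap_eq_update, hzij, update_eq_self, ← hzij, update_eq_self]
  set g : Perm ι → ℤ := fun σ => if ∀ j, φ (z j) = z (σ j) then (sign σ : ℤ) else 0
  have hg (σ : Perm ι) : g σ = -g (σ * swap i j) := by
    have hcond : (∀ k, φ (z k) = z ((σ * swap i j) k)) ↔ ∀ k, φ (z k) = z (σ k) :=
      (swap i j).forall_congr fun {k} => by simp [hz_swap]
    simp only [g, hcond, sign_mul, sign_swap hij]
    split_ifs <;> simp
  have := Fintype.sum_equiv (Equiv.mulRight (swap i j)) g (fun σ => -g σ) (by simpa using hg)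
  rw [Finset.sum_neg_distrib] at this
  exact self_eq_neg.mp this

theorem sum_sign_eq_sign_of_equiv {R : Type*} [Fintype R] [DecidableEq R] (π : Perm R)
    (e : ι ≃ R) :
    ∑ σ : Perm ι, (if ∀ j, π (e j) = e (σ j) then (sign σ : ℤ) else 0) = sign π := by
  have hcond (σ : Perm ι) : (∀ j, π (e j) = e (σ j)) ↔ σ = e.symm.permCongr π := by
    simp [Equiv.ext_iff, Equiv.permCongr_apply, Equiv.eq_symm_apply, eq_comm]
  simp only [hcond, Finset.sum_ite_eq', Finset.mem_univ, if_true, sign_permCongr]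

theorem sign_eq_of_minimalPeriod_eq_card {R : Type*} [Fintype R] [DecidableEq R]
    (π : Perm R) {x : R} (h : minimalPeriod π x = Fintype.card R) :
    sign π = (-1) ^ (Fintype.card R + 1) := by
  obtain ⟨m, hm⟩ := Nat.exists_eq_add_one.2 (Fintype.card_pos_iff.2 ⟨x⟩)
  let e : Fin (m + 1) → R := fun i => π^[i] x
  have he : Bijective e := by
    refine (Fintype.bijective_iff_injective_and_card e).2 ⟨fun i j hij => Fin.ext ?_, by simp [hm]⟩
    exact iterate_injOn_Iio_minimalPeriod (by simp [h, hm, i.is_le]) (by simp [h, hm, j.is_le]) hij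
  have hrot (i : Fin (m + 1)) : e (finRotate (m + 1) i) = π (e i) := by
    rw [← iterate_succ_apply' π, ← iterate_mod_minimalPeriod_eq, h, hm, finRotate_apply]
    simp [e, Fin.val_add]
  rw [← sign_eq_sign_of_equiv _ _ (Equiv.ofBijective e he) hrot, sign_finRotate, hm]
  simp [pow_succ]

end Equiv.Perm

namespace Polynomial

variable {F K : Type*} [Field F] [Field K] [Algebra F K]

theorem mem_rootSet_of_map_eq_prod {ι : Type*} [Fintype ι] {f : F[X]} {z : ι → K}
    (h : f.map (algebraMap F K) = ∏ j, (X - C (z j))) (j : ι) : z j ∈ f.rootSet K := by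
  have hne : f.map (algebraMap F K) ≠ 0 := by
    rw [h]; exact (monic_prod_of_monic _ _ fun j _ => monic_X_sub_C (z j)).ne_zero
  refine mem_rootSet'.2 ⟨hne, ?_⟩
  rw [aeval_def, ← eval_map, h, eval_prod]
  exact Finset.prod_eq_zero (Finset.mem_univ j) (by simp)

theorem squarefree_iff_injective_of_map_eq_prod [PerfectField F] {ι : Type*} [Fintype ι]
    {f : F[X]} {z : ι → K} (h : f.map (algebraMap F K) = ∏ j, (X - C (z j))) :
    Squarefree f ↔ Injective z := by
  rw [← PerfectField.separable_iff_squarefree, ← separable_map (algebraMap F K), h,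
    separable_prod_X_sub_C_iff]

theorem map_eq_prod_rootSet {f : F[X]} (hf : f.Monic) (hsep : f.Separable)
    (hsplit : (f.map (algebraMap F K)).Splits) :
    f.map (algebraMap F K) = ∏ x : f.rootSet K, (X - C (x : K)) := by
  rw [hsplit.eq_prod_roots_of_monic (hf.map _),
    Finset.prod_set_coe (f := fun x => X - C x), Finset.prod_eq_multiset_prod]
  congr
  simp [rootSet_def, aroots_def, Multiset.dedup_eq_self.2 (nodup_roots hsep.map)]

theorem exists_equiv_rootSet_of_map_eq_prod [PerfectField F] {ι : Type*} [Fintype ι]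
    {f : F[X]} (hsf : Squarefree f) {z : ι → K}
    (h : f.map (algebraMap F K) = ∏ j, (X - C (z j))) :
    ∃ e : ι ≃ f.rootSet K, ∀ j, (e j : K) = z j := by
  refine ⟨Equiv.ofBijective (fun j => ⟨z j, mem_rootSet_of_map_eq_prod h j⟩)
    ⟨fun i j hij => (squarefree_iff_injective_of_map_eq_prod h).1 hsf (congrArg Subtype.val hij),
      fun ⟨x, hx⟩ => ?_⟩, fun j => rfl⟩
  have hroot : eval x (∏ j, (X - C (z j))) = 0 := by
    rw [← h, eval_map, ← aeval_def, aeval_eq_zero_of_mem_rootSet hx]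
  obtain ⟨j, -, hj⟩ := Finset.prod_eq_zero_iff.1 (by simpa only [eval_prod] using hroot)
  exact ⟨j, Subtype.ext (by simpa [sub_eq_zero, eq_comm] using hj)⟩

theorem rootSet_mul {p r : F[X]} (h : p * r ≠ 0) :
    (p * r).rootSet K = p.rootSet K ∪ r.rootSet K := by
  ext x
  simp [mem_rootSet, h, left_ne_zero_of_mul h, right_ne_zero_of_mul h]

theorem disjoint_rootSet_of_isCoprime {p r : F[X]} (h : IsCoprime p r) :
    Disjoint (p.rootSet K) (r.rootSet K) :=
  Set.disjoint_left.2 fun x hp hr =>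
    (aeval_ne_zero_of_isCoprime h x).elim (· (aeval_eq_zero_of_mem_rootSet hp))
      (· (aeval_eq_zero_of_mem_rootSet hr))

theorem sign_toPerm_rootSet_mul (g : K ≃ₐ[F] K) {p r : F[X]} (h : IsCoprime p r)
    (hpr : p * r ≠ 0) :
    Perm.sign (MulAction.toPerm g : Perm ((p * r).rootSet K)) =
      Perm.sign (MulAction.toPerm g : Perm (p.rootSet K)) *
        Perm.sign (MulAction.toPerm g : Perm (r.rootSet K)) := by
  let e := (Equiv.setCongr (rootSet_mul (K := K) hpr)).trans
    (Equiv.Set.union (disjoint_rootSet_of_isCoprime h))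
  rw [← Perm.sign_sumCongr]
  refine (Perm.sign_eq_sign_of_equiv _ _ e.symm fun x => ?_).symm
  rcases x with x | x <;> rfl

end Polynomial

namespace FiniteField

variable {F K : Type*} [Field F] [Fintype F] [Field K] [Algebra F K]

theorem period_frobeniusAlgEquivOfAlgebraic_eq_natDegree [Algebra.IsAlgebraic F K] {p : F[X]}
    (hp : Irreducible p) {α : K} (hα : aeval α p = 0) :
    MulAction.period (frobeniusAlgEquivOfAlgebraic F K) α = p.natDegree := by
  have := Fact.mk hp
  have : Module.Finite F (AdjoinRoot p) := (AdjoinRoot.powerBasis hp.ne_zero).finite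
  have : Finite (AdjoinRoot p) := Module.finite_of_finite F
  set φ := frobeniusAlgEquivOfAlgebraic F (AdjoinRoot p)
  have horder : orderOf φ = p.natDegree := by
    rw [orderOf_frobeniusAlgEquivOfAlgebraic, (AdjoinRoot.powerBasis hp.ne_zero).finrank,
      AdjoinRoot.powerBasis_dim]
  have hα' : p.eval₂ (Algebra.ofId F K : F →+* K) α = 0 := by simpa [aeval_def] using hα
  let ι : AdjoinRoot p →ₐ[F] K := AdjoinRoot.liftAlgHom p (Algebra.ofId F K) α hα'
  have hι : Injective ι := ι.toRingHom.injective
  have hfix (k : ℕ) : (frobeniusAlgEquivOfAlgebraic F K ^ k) • α = α ↔ φ ^ k = 1 := by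
    have hsmul :
        (frobeniusAlgEquivOfAlgebraic F K ^ k) • α = ι ((φ ^ k) (AdjoinRoot.root p)) := by
      simp [φ, ι, AlgEquiv.smul_def, coe_frobeniusAlgEquivOfAlgebraic_iterate]
    rw [hsmul, ← AdjoinRoot.liftAlgHom_root p _ α hα', hι.eq_iff]
    exact ⟨fun h => AlgEquiv.coe_toAlgHom_injective (AdjoinRoot.algHom_ext h),
      fun h => by simp [h]⟩
  refine Nat.dvd_antisymm ?_ ?_
  · rw [← MulAction.pow_smul_eq_iff_period_dvd, hfix, ← horder, pow_orderOf_eq_one]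
  · rw [← horder]
    exact orderOf_dvd_of_pow_eq_one ((hfix _).1 (MulAction.pow_period_smul _ _))

variable [Algebra.IsAlgebraic F K] [IsAlgClosed K]

theorem sign_frobenius_rootSet_of_irreducible {p : F[X]} (hp : Irreducible p) :
    Perm.sign (MulAction.toPerm (frobeniusAlgEquivOfAlgebraic F K) : Perm (p.rootSet K)) =
      (-1) ^ (p.natDegree + 1) := by
  have hcard : Fintype.card (p.rootSet K) = p.natDegree :=
    card_rootSet_eq_natDegree (PerfectField.separable_of_irreducible hp) (IsAlgClosed.splits _)
  obtain ⟨α, hα⟩ := IsAlgClosed.exists_aeval_eq_zero K p (degree_pos_of_irreducible hp).ne'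
  let x : p.rootSet K := ⟨α, mem_rootSet.2 ⟨hp.ne_zero, hα⟩⟩
  rw [← hcard]
  refine Perm.sign_eq_of_minimalPeriod_eq_card _ (x := x) ?_
  change MulAction.period (frobeniusAlgEquivOfAlgebraic F K) x = _
  rw [hcard, ← period_frobeniusAlgEquivOfAlgebraic_eq_natDegree hp hα]
  refine Nat.dvd_right_iff_eq.1 fun n => ?_
  rw [← MulAction.pow_smul_eq_iff_period_dvd, ← MulAction.pow_smul_eq_iff_period_dvd,
    Subtype.ext_iff, rootSet.coe_smul]

theorem sign_frobenius_rootSet_of_squarefree {f : F[X]} (hf : Squarefree f) :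
    Perm.sign (MulAction.toPerm (frobeniusAlgEquivOfAlgebraic F K) : Perm (f.rootSet K)) =
      (-1) ^ (f.natDegree + Multiset.card (normalizedFactors f)) := by
  induction f using induction_on_prime with
  | h₁ => exact absurd hf not_squarefree_zero
  | h₂ u hu =>
    obtain ⟨c, -, rfl⟩ := Polynomial.isUnit_iff.1 hu
    have : IsEmpty ((C c).rootSet K) := by rw [rootSet_C]; infer_instance
    simp [Subsingleton.elim (MulAction.toPerm _ : Perm ((C c).rootSet K)) 1,
      normalizedFactors_of_isUnit hu]
  | h₃ a p ha hp ih =>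
    obtain ⟨hcop, -, ha_sq⟩ := squarefree_mul_iff.1 hf
    rw [sign_toPerm_rootSet_mul _ (isRelPrime_iff_isCoprime.1 hcop) (mul_ne_zero hp.ne_zero ha),
      sign_frobenius_rootSet_of_irreducible hp.irreducible, ih ha_sq,
      natDegree_mul hp.ne_zero ha, normalizedFactors_mul hp.ne_zero ha,
      normalizedFactors_irreducible hp.irreducible]
    simp [pow_add, pow_succ, mul_assoc]

end FiniteField

section RootOrderings

variable (F K : Type*) [Field F] [Fintype F] [Field K] [Algebra F K]

noncomputable def rootOrderingSign (f : F[X]) (n : ℕ) (p : (Fin n → K) × Perm (Fin n)) : ℤ :=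
  if f.map (algebraMap F K) = ∏ j : Fin n, (X - C (p.1 j)) ∧
      ∀ j, p.1 j ^ Fintype.card F = p.1 (p.2 j)
    then ((Perm.sign p.2 : ℤˣ) : ℤ) else 0

variable {F K}

theorem map_eq_prod_of_rootOrderingSign_ne_zero {f : F[X]} {n : ℕ}
    {p : (Fin n → K) × Perm (Fin n)} (h : rootOrderingSign F K f n p ≠ 0) :
    f.map (algebraMap F K) = ∏ j, (X - C (p.1 j)) := by
  by_contra hne
  simp [rootOrderingSign, hne] at h

theorem finsum_rootOrderingSign_of_not_squarefree {f : F[X]} (hsf : ¬ Squarefree f) (n : ℕ) :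
    ∑ᶠ p, rootOrderingSign F K f n p = 0 := by
  rw [finsum_prod_eq_sum_sum (Fintype.piFinset fun _ => (f.rootSet K).toFinset)
    fun z σ h => by
      simpa using mem_rootSet_of_map_eq_prod (map_eq_prod_of_rootOrderingSign_ne_zero h)]
  refine Finset.sum_eq_zero fun z _ => ?_
  by_cases h : f.map (algebraMap F K) = ∏ j, (X - C (z j))
  · simp only [rootOrderingSign, h, true_and]
    convert Perm.sum_sign_eq_zero_of_not_injective (· ^ Fintype.card F)
      (mt (squarefree_iff_injective_of_map_eq_prod h).2 hsf)
  · simp [rootOrderingSign, h]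

theorem finsum_rootOrderingSign_of_squarefree [Algebra.IsAlgebraic F K] [IsAlgClosed K]
    {f : F[X]} (hf : f.Monic) (hsf : Squarefree f) {n : ℕ} (hdeg : f.natDegree = n) :
    ∑ᶠ p, rootOrderingSign F K f n p =
      n.factorial * Perm.sign
        (MulAction.toPerm (frobeniusAlgEquivOfAlgebraic F K) : Perm (f.rootSet K)) := by
  have hsep : f.Separable := PerfectField.separable_iff_squarefree.2 hsf
  let ι : (Fin n ≃ f.rootSet K) ↪ (Fin n → K) :=
    ⟨fun e => Subtype.val ∘ e, fun e e' h => Equiv.ext fun j => Subtype.ext (congrFun h j)⟩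
  rw [finsum_prod_eq_sum_sum (Finset.univ.map ι) fun z σ h => by
      obtain ⟨e, he⟩ :=
        exists_equiv_rootSet_of_map_eq_prod hsf (map_eq_prod_of_rootOrderingSign_ne_zero h)
      exact Finset.mem_map.2 ⟨e, Finset.mem_univ _, funext he⟩,
    Finset.sum_map]
  have hterm (e : Fin n ≃ f.rootSet K) : ∑ σ, rootOrderingSign F K f n (ι e, σ) =
      Perm.sign (MulAction.toPerm (frobeniusAlgEquivOfAlgebraic F K) : Perm (f.rootSet K)) := by
    have hprod : f.map (algebraMap F K) = ∏ j, (X - C (ι e j)) :=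
      (map_eq_prod_rootSet hf hsep (IsAlgClosed.splits _)).trans
        (e.prod_comp fun x => X - C (x : K)).symm
    simp only [rootOrderingSign, hprod, true_and]
    convert Perm.sum_sign_eq_sign_of_equiv _ e using 4 with σ
    rw [Subtype.ext_iff]
    rfl
  have hcard : Fintype.card (f.rootSet K) = n :=
    hdeg ▸ card_rootSet_eq_natDegree hsep (IsAlgClosed.splits _)
  have hcount : Fintype.card (Fin n ≃ f.rootSet K) = n.factorial := by
    rw [Fintype.card_equiv (Fintype.equivFinOfCardEq hcard).symm, Fintype.card_fin]
  simp [hterm, hcount]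

end RootOrderings

theorem sum_sign_root_orderings_general (F : Type*) [Field F] [Fintype F] (K : Type*) [Field K]
    [Algebra F K] [IsAlgClosure F K] (n : ℕ) (f : Polynomial F) (hf : f.Monic)
    (hdeg : f.natDegree = n) :
    (∑ᶠ p : (Fin n → K) × Equiv.Perm (Fin n),
        if Polynomial.map (algebraMap F K) f =
              ∏ j : Fin n, (Polynomial.X - Polynomial.C (p.1 j)) ∧
            ∀ j, p.1 j ^ Fintype.card F = p.1 (p.2 j)
          then ((Equiv.Perm.sign p.2 : ℤˣ) : ℤ) else 0) =
      (-1) ^ n * n.factorial * polyMoebius f := by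
  have := IsAlgClosure.isAlgClosed F (K := K)
  change ∑ᶠ p, rootOrderingSign F K f n p = _
  by_cases hsf : Squarefree f
  · rw [finsum_rootOrderingSign_of_squarefree hf hsf hdeg,
      FiniteField.sign_frobenius_rootSet_of_squarefree hsf, polyMoebius, if_pos hsf, hdeg]
    push_cast
    ring
  · rw [finsum_rootOrderingSign_of_not_squarefree hsf, polyMoebius, if_neg hsf, mul_zero]

/-- Let `F` be a finite field with `q` elements, `K` an algebraic closure
of `F`, and `f` a monic polynomial of degree `n ≥ 1` over `F`. The sum of `sgn σ` over all
pairs `((z 0, …, z (n-1)), σ)` with `z ∈ K^n`, `f = ∏ (X - C (z j))` over `K`, and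
`z j ^ q = z (σ j)` for all `j`, equals `(-1) ^ n * n! * μ f`. -/
theorem sum_sign_root_orderings (F : Type*) [Field F] [Fintype F] (K : Type*) [Field K]
    [Algebra F K] [IsAlgClosure F K] (n : ℕ) (hn : 1 ≤ n) (f : Polynomial F) (hf : f.Monic)
    (hdeg : f.natDegree = n) :
    (∑ᶠ p : (Fin n → K) × Equiv.Perm (Fin n),
        if Polynomial.map (algebraMap F K) f =
              ∏ j : Fin n, (Polynomial.X - Polynomial.C (p.1 j)) ∧
            ∀ j, p.1 j ^ Fintype.card F = p.1 (p.2 j)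
          then ((Equiv.Perm.sign p.2 : ℤˣ) : ℤ) else 0) =
      (-1) ^ n * n.factorial * polyMoebius f :=
  sum_sign_root_orderings_general F K n f hf hdeg
end
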